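/- arXiv:1901.05270 — 9 statements merged into one kernel-verified Lean document; each statement's English description precedes it below -/
import Mathlib

section
/- Let H be a Hermitian matrix on ℂ^X for a finite type X whose off-diagonal entries are all real and non-positive (H is stoquastic), let λ be the smallest eigenvalue of H, and let P be the orthogonal projection onto the eigenspace ker(H − λI). Then there exists a finite family {φ_j} of pairwise orthogonal unit vectors in ℂ^X, each with all entries non-negative reals, such that P = Σ_j |φ_j⟩⟨φ_j|. -/
/-!
Being Hermitian with real off-diagonal entries, `H` is a real symmetric matrix `A`, and by
minimality of `λ` the matrix `A - λ` is positive semidefinite. Since the off-diagonal entries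
are non-positive, replacing a real vector `u` by `|u|` does not increase the quadratic form of
`A - λ`, so the real ground space `V = ker (A - λ)` is closed under `u ↦ |u|`.

In such a space, a non-negative `w ∈ V` of minimal support is proportional to every `z ∈ V` on
its support: otherwise `|z - t w| ⊓ w` with `t = z x₀ / w x₀` would be a non-negative element
of `V` of smaller support. Splitting off `w` and recursing on the elements of `V` vanishing on
the support of `w` produces an orthonormal basis of `V` of non-negative vectors with disjoint
supports. The complex ground space is the complexification of `V`, and a Hermitian matrix that
fixes an orthonormal family and maps into its span is the sum of the corresponding rank-one
projections.
-/

open Matrix Function Set Submodule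

section AbsClosed

variable {X : Type*} {V : Submodule ℝ (X → ℝ)}

lemma inf_mem_of_abs_mem (habs : ∀ u ∈ V, |u| ∈ V) {u w : X → ℝ} (hu : u ∈ V) (hw : w ∈ V) :
    u ⊓ w ∈ V := by
  rw [inf_eq_half_smul_add_sub_abs_sub' ℝ]
  exact V.smul_mem _ (V.sub_mem (V.add_mem hu hw) (habs _ (V.sub_mem hw hu)))

lemma eqOn_smul_of_minimal_support (habs : ∀ u ∈ V, |u| ∈ V) {w : X → ℝ} (hwV : w ∈ V)
    (hw0 : 0 ≤ w) (hmin : ∀ m ∈ V, 0 ≤ m → support m ⊂ support w → m = 0) {x₀ : X}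
    (hx₀ : w x₀ ≠ 0) {z : X → ℝ} (hz : z ∈ V) : EqOn z ((z x₀ / w x₀) • w) (support w) := by
  set y := z - (z x₀ / w x₀) • w
  have hy : y x₀ = 0 := by simp [y, div_mul_cancel₀ _ hx₀]
  have hm : |y| ⊓ w = 0 := by
    refine hmin _ (inf_mem_of_abs_mem habs (habs y (V.sub_mem hz (V.smul_mem _ hwV))) hwV)
      (le_inf (abs_nonneg y) hw0) (ssubset_of_subset_not_subset (fun x hx hwx => ?_) fun h => ?_)
    · simp [hwx] at hx
    · exact (hw0 x₀).not_gt (by simpa [hy] using h hx₀)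
  intro x hx
  have hwx : 0 < w x := (hw0 x).lt_of_ne' hx
  have : min |y x| (w x) = 0 := congrFun hm x
  have : |y x| = 0 := by
    rcases min_choice |y x| (w x) with h | h <;> rw [h] at this
    · exact this
    · exact absurd this hwx.ne'
  simpa [y, sub_eq_zero] using this

lemma exists_nonneg_minimal_support [Finite X] (habs : ∀ u ∈ V, |u| ∈ V) {z : X → ℝ}
    (hz : z ∈ V) (hz0 : z ≠ 0) :
    ∃ w ∈ V, 0 ≤ w ∧ w ≠ 0 ∧ ∀ m ∈ V, 0 ≤ m → support m ⊂ support w → m = 0 := by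
  obtain ⟨_, ⟨w, hwV, hw0, hwne, rfl⟩, hmin⟩ :=
    (wellFounded_lt (α := Set X)).has_min {s | ∃ w ∈ V, 0 ≤ w ∧ w ≠ 0 ∧ support w = s}
      ⟨_, |z|, habs z hz, abs_nonneg z, by simpa using hz0, rfl⟩
  refine ⟨w, hwV, hw0, hwne, fun m hmV hm0 hlt => ?_⟩
  by_contra hmne
  exact hmin _ ⟨m, hmV, hm0, hmne, rfl⟩ hlt

lemma exists_unit_nonneg_minimal_support [Fintype X] (habs : ∀ u ∈ V, |u| ∈ V) {z : X → ℝ}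
    (hz : z ∈ V) (hz0 : z ≠ 0) :
    ∃ w ∈ V, 0 ≤ w ∧ w ⬝ᵥ w = 1 ∧ ∀ m ∈ V, 0 ≤ m → support m ⊂ support w → m = 0 := by
  obtain ⟨w, hwV, hw0, hwne, hmin⟩ := exists_nonneg_minimal_support habs hz hz0
  have hpos : 0 < w ⬝ᵥ w :=
    (dotProduct_nonneg_of_nonneg hw0 hw0).lt_of_ne' (dotProduct_self_eq_zero.not.mpr hwne)
  set c := (√(w ⬝ᵥ w))⁻¹ with hc_def
  have hc : 0 < c := by positivity
  refine ⟨c • w, V.smul_mem c hwV, smul_nonneg hc.le hw0, ?_, ?_⟩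
  · rw [smul_dotProduct, dotProduct_smul, smul_eq_mul, smul_eq_mul, ← mul_assoc, ← sq, hc_def,
      inv_pow, Real.sq_sqrt hpos.le, inv_mul_cancel₀ hpos.ne']
  · rwa [support_const_smul_of_ne_zero c w hc.ne']

theorem exists_orthonormal_nonneg_span_of_abs_mem [Fintype X] (habs : ∀ u ∈ V, |u| ∈ V) :
    ∃ (r : ℕ) (v : Fin r → X → ℝ), (∀ j, v j ∈ V) ∧ (∀ j, 0 ≤ v j) ∧ (∀ j, v j ⬝ᵥ v j = 1) ∧
      Pairwise (fun j j' => v j ⬝ᵥ v j' = 0) ∧ V ≤ span ℝ (range v) := by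
  induction hn : Module.finrank ℝ V using Nat.strong_induction_on generalizing V with
  | _ n ih =>
  by_cases hV : V = ⊥
  · exact ⟨0, finZeroElim, finZeroElim, finZeroElim, finZeroElim, fun j => j.elim0,
      by simp [hV]⟩
  obtain ⟨z, hz, hz0⟩ := V.ne_bot_iff.mp hV
  obtain ⟨w, hwV, hw0, hw1, hmin⟩ := exists_unit_nonneg_minimal_support habs hz hz0
  obtain ⟨x₀, hx₀⟩ : ∃ x, w x ≠ 0 := by
    by_contra! h
    simp [funext h] at hw1
  have hdot {v : X → ℝ} (h : w * v = 0) : w ⬝ᵥ v = 0 := by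
    simpa [dotProduct] using congrArg (fun f => ∑ x, f x) h
  -- the elements of `V` vanishing on the support of `w`
  set V' := V ⊓ LinearMap.ker (LinearMap.mulLeft ℝ w)
  have habs' : ∀ u ∈ V', |u| ∈ V' := by
    rintro u ⟨huV, hwu⟩
    refine ⟨habs u huV, funext fun x => ?_⟩
    rcases mul_eq_zero.mp (congrFun hwu x) with h | h <;> simp [h]
  have hlt : V' < V := by
    refine lt_of_le_of_ne inf_le_left fun h => ?_
    have : w * w = 0 := (h ▸ hwV : w ∈ V').2
    simp [hdot this] at hw1
  obtain ⟨r, v, hvV, hv0, hv1, hvorth, hvspan⟩ :=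
    ih _ (hn ▸ finrank_lt_finrank_of_lt hlt) habs' rfl
  have hwv (j) : w ⬝ᵥ v j = 0 := hdot (hvV j).2
  refine ⟨r + 1, Fin.cons w v, Fin.cases hwV fun j => (hvV j).1, Fin.cases hw0 hv0,
    Fin.cases hw1 hv1, ?_, fun u hu => ?_⟩
  · intro j j' hjj'
    cases j using Fin.cases <;> cases j' using Fin.cases
    · exact absurd rfl hjj'
    · exact hwv _
    · simpa [dotProduct_comm] using hwv _
    · exact hvorth fun h => hjj' (congrArg _ h)
  · rw [Fin.range_cons, mem_span_insert]
    refine ⟨u x₀ / w x₀, u - (u x₀ / w x₀) • w,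
      hvspan ⟨V.sub_mem hu (V.smul_mem _ hwV), ?_⟩, by abel⟩
    ext x
    by_cases hx : w x = 0
    · simp [hx]
    · simp [eqOn_smul_of_minimal_support habs hwV hw0 hmin hx₀ hu hx]

end AbsClosed

section Stoquastic

variable {X : Type*} [Fintype X]

lemma dotProduct_mulVec_abs_le {M : Matrix X X ℝ} (hM : ∀ x y, x ≠ y → M x y ≤ 0)
    (u : X → ℝ) : |u| ⬝ᵥ (M *ᵥ |u|) ≤ u ⬝ᵥ (M *ᵥ u) := by
  simp only [dotProduct, mulVec, Finset.mul_sum, Pi.abs_apply]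
  refine Finset.sum_le_sum fun x _ => Finset.sum_le_sum fun y _ => ?_
  rcases eq_or_ne x y with rfl | hxy
  · rw [mul_left_comm, abs_mul_abs_self, mul_left_comm]
  · calc |u x| * (M x y * |u y|) = M x y * |u x * u y| := by rw [abs_mul]; ring
      _ ≤ M x y * (u x * u y) := mul_le_mul_of_nonpos_left (le_abs_self _) (hM x y hxy)
      _ = u x * (M x y * u y) := by ring

lemma Matrix.PosSemidef.mulVec_abs_eq_zero {M : Matrix X X ℝ} (hM : M.PosSemidef)
    (hoff : ∀ x y, x ≠ y → M x y ≤ 0) {u : X → ℝ} (hu : M *ᵥ u = 0) : M *ᵥ |u| = 0 := by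
  refine (hM.dotProduct_mulVec_zero_iff |u|).mp (le_antisymm ?_ ?_)
  · simpa [hu] using dotProduct_mulVec_abs_le hoff u
  · simpa using hM.dotProduct_mulVec_nonneg |u|

lemma Matrix.IsHermitian.posSemidef_sub_smul_one [DecidableEq X] {A : Matrix X X ℝ}
    (hA : A.IsHermitian) {lam : ℝ} (hmin : ∀ μ : ℝ, (∃ u, u ≠ 0 ∧ A *ᵥ u = μ • u) → lam ≤ μ) :
    (A - lam • 1).PosSemidef := by
  have hM : (A - lam • 1).IsHermitian := hA.sub (isHermitian_one.smul (.all lam))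
  refine hM.posSemidef_iff_eigenvalues_nonneg.mpr fun i => ?_
  show 0 ≤ hM.eigenvalues i
  set e : X → ℝ := ⇑(hM.eigenvectorBasis i)
  have he : e ≠ 0 := by simpa [e] using hM.eigenvectorBasis.orthonormal.ne_zero i
  have hAe : A *ᵥ e = (hM.eigenvalues i + lam) • e := by
    have := hM.mulVec_eigenvectorBasis i
    rw [sub_mulVec, smul_mulVec, one_mulVec, sub_eq_iff_eq_add] at this
    rw [add_smul, ← this]
  linarith [hmin _ ⟨e, he, hAe⟩]

end Stoquastic

section Complexification

variable {X : Type*}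

lemma Matrix.IsHermitian.map_re_map_ofReal {H : Matrix X X ℂ} (hH : H.IsHermitian)
    (him : ∀ x y, x ≠ y → (H x y).im = 0) : (H.map Complex.re).map ((↑) : ℝ → ℂ) = H := by
  ext x y
  rcases eq_or_ne x y with rfl | hxy
  · exact hH.coe_re_apply_self x
  · exact Complex.ext rfl (by simp [him x y hxy])

lemma map_ofReal_mulVec_eq_zero_iff [Fintype X] (M : Matrix X X ℝ) (w : X → ℂ) :
    M.map ((↑) : ℝ → ℂ) *ᵥ w = 0 ↔
      M *ᵥ (fun x => (w x).re) = 0 ∧ M *ᵥ (fun x => (w x).im) = 0 := by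
  simp [funext_iff, Complex.ext_iff, mulVec, dotProduct, Complex.re_sum, Complex.im_sum,
    forall_and]

lemma map_ofReal_mulVec_eq_smul_iff [Fintype X] [DecidableEq X] (A : Matrix X X ℝ) (lam : ℝ)
    (w : X → ℂ) : A.map ((↑) : ℝ → ℂ) *ᵥ w = (lam : ℂ) • w ↔
      (A - lam • 1) *ᵥ (fun x => (w x).re) = 0 ∧ (A - lam • 1) *ᵥ (fun x => (w x).im) = 0 := by
  have : (A - lam • 1).map ((↑) : ℝ → ℂ) = A.map (↑) - (lam : ℂ) • 1 := by
    ext x y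
    by_cases hxy : x = y <;> simp [one_apply, hxy]
  rw [← map_ofReal_mulVec_eq_zero_iff, this, sub_mulVec, smul_mulVec, one_mulVec, sub_eq_zero]

lemma ofReal_comp_mem_span {ι : Type*} [Fintype ι] {v : ι → X → ℝ} {u : X → ℝ}
    (hu : u ∈ span ℝ (range v)) :
    (fun x => (u x : ℂ)) ∈ span ℂ (range fun j x => (v j x : ℂ)) := by
  obtain ⟨c, rfl⟩ := (mem_span_range_iff_exists_fun ℝ).mp hu
  exact (mem_span_range_iff_exists_fun ℂ).mpr ⟨fun j => c j, by ext; simp⟩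

lemma mem_span_ofReal_of_re_im_mem_span {ι : Type*} [Fintype ι] {v : ι → X → ℝ} {w : X → ℂ}
    (hre : (fun x => (w x).re) ∈ span ℝ (range v)) (him : (fun x => (w x).im) ∈ span ℝ (range v)) :
    w ∈ span ℂ (range fun j x => (v j x : ℂ)) := by
  have hw : w = (fun x => ((w x).re : ℂ)) + Complex.I • fun x => ((w x).im : ℂ) := by
    ext x
    rw [Pi.add_apply, Pi.smul_apply, smul_eq_mul, mul_comm, Complex.re_add_im]
  rw [hw]
  exact add_mem (ofReal_comp_mem_span hre) (smul_mem _ _ (ofReal_comp_mem_span him))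

end Complexification

section Projection

variable {X R ι : Type*} [Fintype X] [Fintype ι] [CommRing R] [StarRing R]

lemma sum_vecMulVec_mulVec_of_mem_span {φ : ι → X → R} (hnorm : ∀ j, star (φ j) ⬝ᵥ φ j = 1)
    (horth : Pairwise fun j j' => star (φ j) ⬝ᵥ φ j' = 0) {v : X → R}
    (hv : v ∈ span R (range φ)) : (∑ j, vecMulVec (φ j) (star (φ j))) *ᵥ v = v := by
  refine LinearMap.eqOn_span (f := (∑ j, vecMulVec (φ j) (star (φ j))).mulVecLin)
    (g := LinearMap.id) ?_ hv
  rintro _ ⟨i, rfl⟩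
  simp only [mulVecLin_apply, LinearMap.id_apply, sum_mulVec, vecMulVec_mulVec, op_smul_eq_smul]
  rw [Finset.sum_eq_single i (fun j _ hji => by rw [horth hji, zero_smul]) (by simp), hnorm,
    one_smul]

lemma Matrix.IsHermitian.eq_sum_vecMulVec {P : Matrix X X R} (hP : P.IsHermitian)
    {φ : ι → X → R} (hnorm : ∀ j, star (φ j) ⬝ᵥ φ j = 1)
    (horth : Pairwise fun j j' => star (φ j) ⬝ᵥ φ j' = 0) (hfix : ∀ j, P *ᵥ φ j = φ j)
    (hrange : ∀ v, P *ᵥ v ∈ span R (range φ)) :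
    P = ∑ j, vecMulVec (φ j) (star (φ j)) := by
  classical
  set Q := ∑ j, vecMulVec (φ j) (star (φ j))
  have hQ : Q.IsHermitian := by simp [IsHermitian, Q, conjTranspose_sum]
  have hPQ : P * Q = Q := by simp only [Q, Finset.mul_sum, mul_vecMulVec, hfix]
  have hQP : Q * P = P := ext_of_mulVec_single fun i => by
    rw [← mulVec_mulVec, sum_vecMulVec_mulVec_of_mem_span hnorm horth (hrange _)]
  calc P = Pᴴ := hP.eq.symm
    _ = (Q * P)ᴴ := by rw [hQP]
    _ = Q := by rw [conjTranspose_mul, hP.eq, hQ.eq, hPQ]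

end Projection

theorem stmt1_general {X : Type} [Fintype X] [DecidableEq X]
    (H : Matrix X X ℂ) (hHerm : H.IsHermitian)
    (hstoq : ∀ x y, x ≠ y → (H x y).im = 0 ∧ (H x y).re ≤ 0)
    (lam : ℝ)
    (hmin : ∀ μ : ℝ, (∃ v : X → ℂ, v ≠ 0 ∧ H.mulVec v = (μ : ℂ) • v) → lam ≤ μ)
    (P : Matrix X X ℂ)
    (hP1 : P.IsHermitian)
    (hPrange : ∀ v : X → ℂ, H.mulVec (P.mulVec v) = (lam : ℂ) • P.mulVec v)
    (hPfix : ∀ v : X → ℂ, H.mulVec v = (lam : ℂ) • v → P.mulVec v = v) :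
    ∃ (r : ℕ) (φ : Fin r → X → ℂ),
      (∀ j x, (φ j x).im = 0 ∧ 0 ≤ (φ j x).re) ∧
      (∀ j, star (φ j) ⬝ᵥ φ j = 1) ∧
      (∀ j j', j ≠ j' → star (φ j) ⬝ᵥ φ j' = 0) ∧
      P = ∑ j, vecMulVec (φ j) (star (φ j)) := by
  obtain ⟨A, rfl⟩ : ∃ A : Matrix X X ℝ, A.map (↑) = H :=
    ⟨_, hHerm.map_re_map_ofReal fun x y hxy => (hstoq x y hxy).1⟩
  have hA : A.IsHermitian :=
    (isHermitian_map_iff (fun x => (Complex.conj_ofReal x).symm) Complex.ofReal_injective).mp hHerm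
  have hoff : ∀ x y, x ≠ y → (A - lam • 1) x y ≤ 0 := fun x y hxy => by
    simpa [one_apply, hxy] using (hstoq x y hxy).2
  have hM : (A - lam • 1).PosSemidef := by
    refine hA.posSemidef_sub_smul_one fun μ ⟨u, hu0, hu⟩ => hmin μ ⟨fun x => u x, ?_, ?_⟩
    · exact fun h => hu0 (funext fun x => by simpa using congrFun h x)
    · rw [map_ofReal_mulVec_eq_smul_iff]
      exact ⟨by simp [sub_mulVec, smul_mulVec, hu], by simp [← Pi.zero_def]⟩
  obtain ⟨r, u, huV, hu0, hnorm, horth, hspan⟩ :=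
    exists_orthonormal_nonneg_span_of_abs_mem (V := LinearMap.ker (A - lam • 1).mulVecLin)
      fun v hv => hM.mulVec_abs_eq_zero hoff hv
  set φ : Fin r → X → ℂ := fun j x => (u j x : ℂ)
  have hdot (j j') : star (φ j) ⬝ᵥ φ j' = ((u j ⬝ᵥ u j' : ℝ) : ℂ) := by simp [φ, dotProduct]
  have hφnorm (j) : star (φ j) ⬝ᵥ φ j = 1 := by simp [hdot, hnorm]
  have hφorth : Pairwise fun j j' => star (φ j) ⬝ᵥ φ j' = 0 := fun j j' h => by simp [hdot, horth h]
  have hφ (j) : A.map (↑) *ᵥ φ j = (lam : ℂ) • φ j :=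
    (map_ofReal_mulVec_eq_smul_iff A lam _).mpr ⟨huV j, by simp [φ, ← Pi.zero_def]⟩
  refine ⟨r, φ, fun j x => ⟨by simp [φ], by simpa [φ] using hu0 j x⟩, hφnorm, hφorth,
    hP1.eq_sum_vecMulVec hφnorm hφorth (fun j => hPfix _ (hφ j)) fun v => ?_⟩
  obtain ⟨hre, him⟩ := (map_ofReal_mulVec_eq_smul_iff A lam _).mp (hPrange v)
  exact mem_span_ofReal_of_re_im_mem_span (hspan hre) (hspan him)

/-- The projection onto the groundspace of a stoquastic Hamiltonian has a decomposition
into pairwise orthogonal non-negative unit vectors. -/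
theorem stmt1 {X : Type} [Fintype X] [DecidableEq X]
    (H : Matrix X X ℂ) (hHerm : H.IsHermitian)
    (hstoq : ∀ x y, x ≠ y → (H x y).im = 0 ∧ (H x y).re ≤ 0)
    (lam : ℝ)
    (heig : ∃ v : X → ℂ, v ≠ 0 ∧ H.mulVec v = (lam : ℂ) • v)
    (hmin : ∀ μ : ℝ, (∃ v : X → ℂ, v ≠ 0 ∧ H.mulVec v = (μ : ℂ) • v) → lam ≤ μ)
    (P : Matrix X X ℂ)
    (hP1 : P.IsHermitian) (hP2 : P * P = P)
    (hPrange : ∀ v : X → ℂ, H.mulVec (P.mulVec v) = (lam : ℂ) • P.mulVec v)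
    (hPfix : ∀ v : X → ℂ, H.mulVec v = (lam : ℂ) • v → P.mulVec v = v) :
    ∃ (r : ℕ) (φ : Fin r → X → ℂ),
      (∀ j x, (φ j x).im = 0 ∧ 0 ≤ (φ j x).re) ∧
      (∀ j, star (φ j) ⬝ᵥ φ j = 1) ∧
      (∀ j j', j ≠ j' → star (φ j) ⬝ᵥ φ j' = 0) ∧
      P = ∑ j, vecMulVec (φ j) (star (φ j)) :=
  stmt1_general H hHerm hstoq lam hmin P hP1 hPrange hPfix
end

section
/- Let H be a Hermitian matrix on ℂ^X for a finite type X whose off-diagonal entries are all real and non-positive. Then for every real β ≥ 0, every entry of the matrix exponential exp(−βH) is a non-negative real number. -/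
/-!
Off the diagonal `-βH` is entrywise non-negative, and its diagonal is real, so adding a large
real scalar `c` makes it entrywise non-negative. Entrywise non-negative matrices form a
topologically closed subsemiring stable under non-negative scaling, so they contain the whole
exponential series; and since scalars commute, `exp(-βH) = exp(-c) • exp(c - βH)`.
-/

open Matrix NormedSpace

open scoped ComplexOrder

namespace Matrix

variable (n R : Type*) [Fintype n] [DecidableEq n]

def entrywiseNonneg [Semiring R] [PartialOrder R] [IsOrderedRing R] :
    Subsemiring (Matrix n n R) where
  carrier := {A | ∀ i j, 0 ≤ A i j}
  zero_mem' _ _ := le_rfl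
  one_mem' i j := by
    rw [one_apply]
    split_ifs <;> simp
  add_mem' hA hB i j := add_nonneg (hA i j) (hB i j)
  mul_mem' hA hB i j := Finset.sum_nonneg fun k _ => mul_nonneg (hA i k) (hB k j)

variable {n R}

section Semiring

variable [Semiring R] [PartialOrder R] [IsOrderedRing R]

theorem mem_entrywiseNonneg {A : Matrix n n R} : A ∈ entrywiseNonneg n R ↔ ∀ i j, 0 ≤ A i j :=
  Iff.rfl

theorem isClosed_entrywiseNonneg [TopologicalSpace R] [OrderClosedTopology R] :
    IsClosed (entrywiseNonneg n R : Set (Matrix n n R)) := by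
  have h : (entrywiseNonneg n R : Set (Matrix n n R)) = ⋂ i, ⋂ j, {A | 0 ≤ A i j} := by
    ext
    simp [mem_entrywiseNonneg]
  rw [h]
  exact isClosed_iInter fun i => isClosed_iInter fun j =>
    isClosed_le continuous_const ((continuous_apply j).comp (continuous_apply i))

theorem smul_mem_entrywiseNonneg {S : Type*} [Semiring S] [PartialOrder S] [Module S R]
    [PosSMulMono S R] {c : S} (hc : 0 ≤ c) {A : Matrix n n R} (hA : A ∈ entrywiseNonneg n R) :
    c • A ∈ entrywiseNonneg n R :=
  fun i j => smul_nonneg hc (hA i j)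

end Semiring

theorem exp_mem_entrywiseNonneg [Ring R] [PartialOrder R] [IsOrderedRing R] [TopologicalSpace R]
    [IsTopologicalRing R] [OrderClosedTopology R] [Algebra ℝ R] [PosSMulMono ℝ R]
    {A : Matrix n n R} (hA : A ∈ entrywiseNonneg n R) : exp A ∈ entrywiseNonneg n R := by
  rw [exp_eq_tsum ℝ]
  exact tsum_mem isClosed_entrywiseNonneg fun k =>
    smul_mem_entrywiseNonneg (by positivity) (pow_mem hA k)

theorem exp_scalar_add {𝔸 : Type*} [NormedCommRing 𝔸] [NormedAlgebra ℚ 𝔸] [CompleteSpace 𝔸]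
    (a : 𝔸) (A : Matrix n n 𝔸) : exp (scalar n a + A) = exp a • exp A := by
  rw [exp_add_of_commute _ _ (scalar_commute a (Commute.all a) A), scalar_apply,
    exp_diagonal, Pi.exp_def, ← smul_eq_diagonal_mul]

theorem exp_mem_entrywiseNonneg_of_offDiag_nonneg {A : Matrix n n ℂ}
    (hdiag : ∀ i, (A i i).im = 0) (hoff : ∀ i j, i ≠ j → 0 ≤ A i j) :
    exp A ∈ entrywiseNonneg n ℂ := by
  obtain ⟨c, hc⟩ : ∃ c : ℝ, ∀ i, -(A i i).re ≤ c := Finite.exists_le _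
  have hshift : scalar n (c : ℂ) + A ∈ entrywiseNonneg n ℂ := by
    intro i j
    rcases eq_or_ne i j with rfl | hij
    · rw [add_apply, scalar_apply, diagonal_apply_eq, Complex.nonneg_iff]
      simp only [Complex.add_re, Complex.ofReal_re, Complex.add_im, Complex.ofReal_im, hdiag]
      constructor <;> linarith [hc i]
    · simpa [hij] using hoff i j hij
  have hsplit : A = scalar n (-c : ℂ) + (scalar n (c : ℂ) + A) := by
    rw [← add_assoc, ← map_add, neg_add_cancel, map_zero, zero_add]
  rw [hsplit, exp_scalar_add, ← Complex.exp_eq_exp_ℂ, ← Complex.ofReal_neg, ← Complex.ofReal_exp]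
  exact smul_mem_entrywiseNonneg (by positivity) (exp_mem_entrywiseNonneg hshift)

end Matrix

/-- If `H` is Hermitian with non-positive real off-diagonal entries, then for `β ≥ 0`
every entry of `exp(-βH)` is a non-negative real number. -/
theorem stmt2 {X : Type} [Fintype X] [DecidableEq X]
    (H : Matrix X X ℂ) (hHerm : H.IsHermitian)
    (hstoq : ∀ x y, x ≠ y → (H x y).im = 0 ∧ (H x y).re ≤ 0)
    (β : ℝ) (hβ : 0 ≤ β) :
    ∀ x y, ((NormedSpace.exp (((-β : ℂ)) • H)) x y).im = 0 ∧
      0 ≤ ((NormedSpace.exp (((-β : ℂ)) • H)) x y).re := by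
  have hdiag (x : X) : (((-β : ℂ) • H) x x).im = 0 := by
    have hHxx : (H x x).im = 0 := Complex.conj_eq_iff_im.mp (hHerm.apply x x)
    simp [Complex.mul_im, hHxx]
  have hoff (x y : X) (hxy : x ≠ y) : 0 ≤ ((-β : ℂ) • H) x y := by
    have hH : H x y ≤ 0 := Complex.le_def.mpr ⟨(hstoq x y hxy).2, (hstoq x y hxy).1⟩
    have hβ' : (-β : ℂ) ≤ 0 := neg_nonpos.mpr (Complex.zero_le_real.mpr hβ)
    exact mul_nonneg_of_nonpos_of_nonpos hβ' hH
  intro x y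
  obtain ⟨hre, him⟩ :=
    Complex.nonneg_iff.mp (exp_mem_entrywiseNonneg_of_offDiag_nonneg hdiag hoff x y)
  exact ⟨him.symm, hre⟩
end

section
/- Let P = Σ_{j∈J} |φ_j⟩⟨φ_j| be a stoquastic projector on a finite type X with non-negative decomposition {φ_j}, and let ψ be a non-negative vector on X. Then: (i) every x ∈ supp(ψ) with ⟨x|P|x⟩ > 0 (i.e. every P-good string in the support of ψ) satisfies x ∈ supp(Pψ); and (ii) supp(Pψ) = ⋃_{j : ⟨φ_j, ψ⟩ > 0} supp(φ_j). -/
open Matrix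

/-- For a stoquastic projector `P` and a non-negative vector `ψ`: (i) every `P`-good string
in the support of `ψ` is in the support of `Pψ`, and (ii) the support of `Pψ` is the union of
the supports of the decomposition vectors that overlap `ψ`. -/
theorem stmt4 {X : Type} [Fintype X] [DecidableEq X]
    (P : Matrix X X ℂ) (hP1 : P.IsHermitian) (hP2 : P * P = P)
    {J : Type} [Fintype J] (φ : J → X → ℂ)
    (hnn : ∀ j x, (φ j x).im = 0 ∧ 0 ≤ (φ j x).re)
    (hunit : ∀ j, star (φ j) ⬝ᵥ φ j = 1)
    (horth : ∀ j j', j ≠ j' → star (φ j) ⬝ᵥ φ j' = 0)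
    (hdecomp : P = ∑ j, vecMulVec (φ j) (star (φ j)))
    (ψ : X → ℂ) (hψ : ∀ x, (ψ x).im = 0 ∧ 0 ≤ (ψ x).re) :
    (∀ x, ψ x ≠ 0 → 0 < (P x x).re → P.mulVec ψ x ≠ 0) ∧
    {x | P.mulVec ψ x ≠ 0} = ⋃ j ∈ {j : J | 0 < (star (φ j) ⬝ᵥ ψ).re}, {x | φ j x ≠ 0} := by
  set a : J → X → ℝ := fun j x => (φ j x).re with ha
  set b : X → ℝ := fun x => (ψ x).re with hb
  have hφ : ∀ j x, φ j x = (a j x : ℂ) := fun j x => by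
    apply Complex.ext <;> simp [ha, (hnn j x).1]
  have hψ' : ∀ x, ψ x = (b x : ℂ) := fun x => by
    apply Complex.ext <;> simp [hb, (hψ x).1]
  have ha0 : ∀ j x, 0 ≤ a j x := fun j x => (hnn j x).2
  have hb0 : ∀ x, 0 ≤ b x := fun x => (hψ x).2
  set C : J → ℝ := fun j => ∑ y, a j y * b y with hC
  have hC0 : ∀ j, 0 ≤ C j := fun j =>
    Finset.sum_nonneg fun y _ => mul_nonneg (ha0 j y) (hb0 y)
  have hc : ∀ j, star (φ j) ⬝ᵥ ψ = ((C j : ℝ) : ℂ) := by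
    intro j
    simp only [dotProduct, Pi.star_apply, hφ, hψ', Complex.star_def, Complex.conj_ofReal, hC]
    push_cast
    ring
  have hPψ : ∀ x, P.mulVec ψ x = ((∑ j, a j x * C j : ℝ) : ℂ) := by
    intro x
    rw [hdecomp]
    simp only [mulVec, dotProduct, Matrix.sum_apply, vecMulVec_apply, Pi.star_apply,
      hφ, hψ', Complex.star_def, Complex.conj_ofReal, hC]
    push_cast
    simp only [Finset.sum_mul]
    rw [Finset.sum_comm]
    simp [Finset.mul_sum, mul_assoc]
  have hPd : ∀ x, (P x x).re = ∑ j, a j x ^ 2 := by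
    intro x
    have hPxx : P x x = ((∑ j, a j x ^ 2 : ℝ) : ℂ) := by
      rw [hdecomp]
      simp only [Matrix.sum_apply, vecMulVec_apply, Pi.star_apply,
        hφ, Complex.star_def, Complex.conj_ofReal]
      push_cast
      exact Finset.sum_congr rfl fun j _ => (sq (a j x : ℂ)).symm
    rw [hPxx, Complex.ofReal_re]
  constructor
  · intro x hx hPx
    rw [hPψ]
    have hbx : 0 < b x := by
      rcases lt_or_eq_of_le (hb0 x) with h | h
      · exact h
      · exact absurd (by rw [hψ' x, ← h]; simp) hx
    rw [hPd x] at hPx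
    obtain ⟨j, -, hj⟩ := Finset.exists_lt_of_sum_lt (by simpa using hPx :
      ∑ _j : J, (0:ℝ) < ∑ j, a j x ^ 2)
    have haj : 0 < a j x := by
      rcases lt_or_eq_of_le (ha0 j x) with h | h
      · exact h
      · simp [← h] at hj
    have hCj : 0 < C j := by
      have : a j x * b x ≤ C j := Finset.single_le_sum
        (f := fun y => a j y * b y) (fun y _ => mul_nonneg (ha0 j y) (hb0 y))
        (Finset.mem_univ x)
      exact lt_of_lt_of_le (mul_pos haj hbx) this
    have : 0 < ∑ j, a j x * C j := by
      have h1 : a j x * C j ≤ ∑ j, a j x * C j := Finset.single_le_sum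
        (fun j _ => mul_nonneg (ha0 j x) (hC0 j)) (Finset.mem_univ j)
      exact lt_of_lt_of_le (mul_pos haj hCj) h1
    exact_mod_cast this.ne'
  · ext x
    simp only [Set.mem_setOf_eq, Set.mem_iUnion, hPψ, hc, Complex.ofReal_re]
    rw [Ne, Complex.ofReal_eq_zero]
    constructor
    · intro h
      have this : ¬ ∀ j ∈ Finset.univ, a j x * C j = 0 :=
        fun hz => h ((Finset.sum_eq_zero_iff_of_nonneg
          (fun j _ => mul_nonneg (ha0 j x) (hC0 j))).mpr hz)
      push_neg at this
      obtain ⟨j, -, hj⟩ := this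
      have haj : a j x ≠ 0 := fun h0 => hj (by simp [h0])
      have hCj : C j ≠ 0 := fun h0 => hj (by simp [h0])
      refine ⟨j, lt_of_le_of_ne (hC0 j) (Ne.symm hCj), ?_⟩
      rw [hφ]
      exact_mod_cast haj
    · rintro ⟨j, hCj, hφj⟩
      have haj : 0 < a j x := by
        rcases lt_or_eq_of_le (ha0 j x) with h | h
        · exact h
        · exact absurd (by rw [hφ j x, ← h]; simp) hφj
      have : 0 < ∑ j, a j x * C j := by
        have h1 : a j x * C j ≤ ∑ j, a j x * C j := Finset.single_le_sum
          (fun j _ => mul_nonneg (ha0 j x) (hC0 j)) (Finset.mem_univ j)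
        exact lt_of_lt_of_le (mul_pos haj hCj) h1
      exact this.ne'
end

section
/- Let P be a stoquastic projector on a finite type X. (i) If ψ and ψ' are non-negative vectors on X with supp(ψ) = supp(ψ'), then supp(Pψ) = supp(Pψ'). (ii) Consequently, for stoquastic projectors P₁, P₂ on X and a non-negative vector ψ with P₂ψ ≠ 0, one has supp(P₁ P₂ ψ) = supp(P₁ |S⟩) where S = supp(P₂ψ) and |S⟩ = (1/√|S|) Σ_{x∈S} |x⟩ is the subset state of S. -/
open Matrix

/-- `P` is a stoquastic projector: an orthogonal projection admitting a decomposition into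
rank-one projections onto pairwise orthogonal non-negative unit vectors. -/
def IsStoqProj {X : Type} [Fintype X] (P : Matrix X X ℂ) : Prop :=
  P.IsHermitian ∧ P * P = P ∧
  ∃ (r : ℕ) (φ : Fin r → X → ℂ),
    (∀ j x, (φ j x).im = 0 ∧ 0 ≤ (φ j x).re) ∧
    (∀ j, star (φ j) ⬝ᵥ φ j = 1) ∧
    (∀ j j', j ≠ j' → star (φ j) ⬝ᵥ φ j' = 0) ∧
    P = ∑ j, vecMulVec (φ j) (star (φ j))

/-- The subset state of a finite set `S`. -/
noncomputable def subsetState {X : Type} [DecidableEq X] (S : Finset X) : X → ℂ :=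
  fun x => if x ∈ S then ((Real.sqrt S.card : ℂ))⁻¹ else 0

namespace Stmt5Aux

def Nn (z : ℂ) : Prop := z.im = 0 ∧ 0 ≤ z.re

lemma nn_ne_iff {z : ℂ} (h : Nn z) : z ≠ 0 ↔ z.re ≠ 0 := by
  constructor
  · intro hz hre; exact hz (Complex.ext hre (by simp [h.1]))
  · intro hre hz; exact hre (by simp [hz])

lemma nn_mul {z w : ℂ} (hz : Nn z) (hw : Nn w) : Nn (z * w) :=
  ⟨by simp [Complex.mul_im, hz.1, hw.1],
   by simpa [Complex.mul_re, hz.1, hw.1] using mul_nonneg hz.2 hw.2⟩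

lemma nn_sum {ι : Type*} (s : Finset ι) (f : ι → ℂ) (h : ∀ i ∈ s, Nn (f i)) :
    Nn (∑ i ∈ s, f i) := by
  constructor
  · rw [Complex.im_sum]; exact Finset.sum_eq_zero fun i hi => (h i hi).1
  · rw [Complex.re_sum]; exact Finset.sum_nonneg fun i hi => (h i hi).2

lemma sum_ne_zero_iff {ι : Type*} (s : Finset ι) (f : ι → ℂ) (h : ∀ i ∈ s, Nn (f i)) :
    (∑ i ∈ s, f i) ≠ 0 ↔ ∃ i ∈ s, f i ≠ 0 := by
  rw [nn_ne_iff (nn_sum s f h), Complex.re_sum, ← not_iff_not]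
  push_neg
  constructor
  · intro h0 i hi
    have := (Finset.sum_eq_zero_iff_of_nonneg (fun i hi => (h i hi).2)).mp h0 i hi
    exact Complex.ext this (h i hi).1
  · intro h0
    exact Finset.sum_eq_zero fun i hi => by rw [h0 i hi]; simp

lemma mulVec_eq {X : Type} [Fintype X] (r : ℕ) (φ : Fin r → X → ℂ)
    (hφ : ∀ j x, Nn (φ j x)) (ψ : X → ℂ) (x : X) :
    (∑ j, vecMulVec (φ j) (star (φ j))).mulVec ψ x
      = ∑ j, φ j x * ∑ y, φ j y * ψ y := by
  have hconj : ∀ j y, (starRingEnd ℂ) (φ j y) = φ j y := fun j y =>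
    Complex.conj_eq_iff_im.mpr (hφ j y).1
  simp only [Matrix.mulVec, dotProduct, Finset.sum_apply, Matrix.sum_apply, vecMulVec_apply,
    Pi.star_apply, Complex.star_def, Finset.sum_mul]
  rw [Finset.sum_comm]
  refine Finset.sum_congr rfl fun j _ => ?_
  rw [Finset.mul_sum]
  refine Finset.sum_congr rfl fun y _ => ?_
  rw [hconj]; ring

lemma char {X : Type} [Fintype X] (r : ℕ) (φ : Fin r → X → ℂ)
    (hφ : ∀ j x, Nn (φ j x)) (ψ : X → ℂ) (hψ : ∀ x, Nn (ψ x)) (x : X) :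
    (∑ j, vecMulVec (φ j) (star (φ j))).mulVec ψ x ≠ 0 ↔
      ∃ j, φ j x ≠ 0 ∧ ∃ y, φ j y ≠ 0 ∧ ψ y ≠ 0 := by
  rw [mulVec_eq r φ hφ ψ x,
    sum_ne_zero_iff _ _ (fun j _ => nn_mul (hφ j x)
      (nn_sum _ _ fun y _ => nn_mul (hφ j y) (hψ y)))]
  simp only [Finset.mem_univ, true_and]
  refine exists_congr fun j => ?_
  rw [mul_ne_zero_iff]
  refine and_congr_right fun _ => ?_
  rw [sum_ne_zero_iff _ _ fun y _ => nn_mul (hφ j y) (hψ y)]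
  simp [mul_ne_zero_iff]

lemma nonneg_mulVec {X : Type} [Fintype X] (P : Matrix X X ℂ) (hP : IsStoqProj P)
    (ψ : X → ℂ) (hψ : ∀ x, Nn (ψ x)) (x : X) : Nn (P.mulVec ψ x) := by
  obtain ⟨-, -, r, φ, hφ, -, -, rfl⟩ := hP
  rw [mulVec_eq r φ hφ ψ x]
  exact nn_sum _ _ fun j _ => nn_mul (hφ j x)
    (nn_sum _ _ fun y _ => nn_mul (hφ j y) (hψ y))

lemma support_key {X : Type} [Fintype X] (P : Matrix X X ℂ) (hP : IsStoqProj P)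
    (ψ ψ' : X → ℂ) (hψ : ∀ x, Nn (ψ x)) (hψ' : ∀ x, Nn (ψ' x))
    (hsupp : {x | ψ x ≠ 0} = {x | ψ' x ≠ 0}) :
    {x | P.mulVec ψ x ≠ 0} = {x | P.mulVec ψ' x ≠ 0} := by
  obtain ⟨-, -, r, φ, hφ, -, -, rfl⟩ := hP
  have hy : ∀ y, ψ y ≠ 0 ↔ ψ' y ≠ 0 := fun y => Set.ext_iff.mp hsupp y
  ext x
  simp only [Set.mem_setOf_eq, char r φ hφ ψ hψ x, char r φ hφ ψ' hψ' x, hy]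

end Stmt5Aux

open Stmt5Aux in
/-- (i) Applying a stoquastic projector to non-negative vectors with the same support yields
vectors with the same support.  (ii) Hence `supp(P₁P₂ψ) = supp(P₁|S⟩)` where `S = supp(P₂ψ)`. -/
theorem stmt5 {X : Type} [Fintype X] [DecidableEq X]
    (P P₁ P₂ : Matrix X X ℂ)
    (hP : IsStoqProj P) (hP₁ : IsStoqProj P₁) (hP₂ : IsStoqProj P₂) :
    (∀ ψ ψ' : X → ℂ, (∀ x, (ψ x).im = 0 ∧ 0 ≤ (ψ x).re) →
      (∀ x, (ψ' x).im = 0 ∧ 0 ≤ (ψ' x).re) →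
      {x | ψ x ≠ 0} = {x | ψ' x ≠ 0} →
      {x | P.mulVec ψ x ≠ 0} = {x | P.mulVec ψ' x ≠ 0}) ∧
    (∀ ψ : X → ℂ, (∀ x, (ψ x).im = 0 ∧ 0 ≤ (ψ x).re) → P₂.mulVec ψ ≠ 0 →
      ∀ S : Finset X, (↑S = {x | P₂.mulVec ψ x ≠ 0}) →
        {x | P₁.mulVec (P₂.mulVec ψ) x ≠ 0} = {x | P₁.mulVec (subsetState S) x ≠ 0}) := by
  constructor
  · exact fun ψ ψ' hψ hψ' hs => support_key P hP ψ ψ' hψ hψ' hs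
  · intro ψ hψ hne S hS
    have hχ : ∀ x, Nn (P₂.mulVec ψ x) := nonneg_mulVec P₂ hP₂ ψ hψ
    -- S is nonempty
    obtain ⟨x₀, hx₀⟩ : ∃ x, P₂.mulVec ψ x ≠ 0 := by
      by_contra h; push_neg at h; exact hne (funext h)
    have hx₀S : x₀ ∈ S := by rw [← Finset.mem_coe, hS]; exact hx₀
    have hcard : (0 : ℝ) < S.card := by
      exact_mod_cast Finset.card_pos.mpr ⟨x₀, hx₀S⟩
    have hsqrt : (0 : ℝ) < Real.sqrt S.card := Real.sqrt_pos.mpr hcard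
    have hval : ((Real.sqrt S.card : ℂ))⁻¹ ≠ 0 := by
      simp [Complex.ofReal_ne_zero, ne_of_gt hsqrt]
    have hss : ∀ x, Nn (subsetState S x) := by
      intro x
      unfold subsetState
      split
      · constructor
        · rw [← Complex.ofReal_inv]; simp
        · rw [← Complex.ofReal_inv]; simp only [Complex.ofReal_re]; positivity
      · simp [Nn]
    have hsupp : {x | P₂.mulVec ψ x ≠ 0} = {x | subsetState S x ≠ 0} := by
      rw [← hS]
      ext x
      simp only [Finset.coe_sort_coe, Finset.mem_coe, Set.mem_setOf_eq, subsetState]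
      constructor
      · intro hx; simp [hx, hval]
      · intro hx; by_contra h; simp [h] at hx
    exact support_key P₁ hP₁ _ _ hχ hss hsupp
end

section
/- Let H = (1/m) Σ_{i=1}^m (I − P̃_i) be a uniform stoquastic k-local Hamiltonian. Suppose ψ is a nonzero vector on ℂ^(Σ^n) with P̃_i ψ = ψ for every i ∈ {1,…,m} (so ψ is a frustration-free groundstate of H). Then the subset state |S⟩ for S = supp(ψ) also satisfies P̃_i |S⟩ = |S⟩ for every i ∈ {1,…,m}. -/
open Matrix

/-- A uniform stoquastic `k`-local term on strings in `Σ^n`: a set `Q` of at most `k` qudits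
together with a finite family of pairwise disjoint nonempty subsets of `Σ^Q`. -/
structure UTerm (A : Type) [Fintype A] [DecidableEq A] (n k : ℕ) where
  Q : Finset (Fin n)
  hQ : Q.card ≤ k
  J : ℕ
  T : Fin J → Finset ({ i : Fin n // i ∈ Q } → A)
  hT : ∀ j, (T j).Nonempty
  hdisj : ∀ j j', j ≠ j' → Disjoint (T j) (T j')

variable {A : Type} [Fintype A] [DecidableEq A] {n k : ℕ}

/-- The string equal to `t` on `Q` and to `z` on `Qᶜ`. -/
def glue (Q : Finset (Fin n)) (t : { i : Fin n // i ∈ Q } → A)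
    (z : { i : Fin n // i ∉ Q } → A) : Fin n → A :=
  fun i => if h : i ∈ Q then t ⟨i, h⟩ else z ⟨i, h⟩

/-- The subset state `|T_j , z⟩` of a local term. -/
noncomputable def UTerm.tvec (P : UTerm A n k) (j : Fin P.J)
    (z : { i : Fin n // i ∉ P.Q } → A) : (Fin n → A) → ℂ :=
  ((Real.sqrt (P.T j).card : ℂ))⁻¹ •
    (∑ t ∈ P.T j, Pi.single (glue P.Q t z) (1 : ℂ) : (Fin n → A) → ℂ)

/-- The groundspace projector `P̃ = Σ_j Σ_z |T_j,z⟩⟨T_j,z|` of a uniform stoquastic local term. -/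
noncomputable def UTerm.proj (P : UTerm A n k) : Matrix (Fin n → A) (Fin n → A) ℂ :=
  ∑ j : Fin P.J, ∑ z : { i : Fin n // i ∉ P.Q } → A,
    vecMulVec (P.tvec j z) (star (P.tvec j z))

/-- The uniform stoquastic local Hamiltonian `H = (1/m) Σᵢ (I - P̃ᵢ)`. -/
noncomputable def ham {m : ℕ} (terms : Fin m → UTerm A n k) :
    Matrix (Fin n → A) (Fin n → A) ℂ :=
  ((m : ℂ))⁻¹ • ∑ i, (1 - (terms i).proj)

/-- A string is bad for `H` if its diagonal entry in some groundspace projector vanishes. -/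
def Bad {m : ℕ} (terms : Fin m → UTerm A n k) (x : Fin n → A) : Prop :=
  ∃ i, (terms i).proj x x = 0

/-- `H` is `ε`-frustrated: every unit vector has energy at least `ε`. -/
def Frustrated {m : ℕ} (terms : Fin m → UTerm A n k) (ε : ℝ) : Prop :=
  ∀ ψ : (Fin n → A) → ℂ, ∑ x, ‖ψ x‖ ^ 2 = 1 →
    ε ≤ (star ψ ⬝ᵥ (ham terms).mulVec ψ).re

/-- Every qudit lies in at most `d` of the sets `Qᵢ`. -/
def DegreeBound {m : ℕ} (terms : Fin m → UTerm A n k) (d : ℕ) : Prop :=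
  ∀ q : Fin n, (Finset.univ.filter (fun i => q ∈ (terms i).Q)).card ≤ d

-- restrictions
def rQ (Q : Finset (Fin n)) (x : Fin n → A) : { i : Fin n // i ∈ Q } → A := fun i => x i
def rC (Q : Finset (Fin n)) (x : Fin n → A) : { i : Fin n // i ∉ Q } → A := fun i => x i

lemma rQ_glue (Q : Finset (Fin n)) (t : { i : Fin n // i ∈ Q } → A)
    (z : { i : Fin n // i ∉ Q } → A) : rQ Q (glue Q t z) = t :=
  funext fun i => dif_pos i.2

lemma rC_glue (Q : Finset (Fin n)) (t : { i : Fin n // i ∈ Q } → A)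
    (z : { i : Fin n // i ∉ Q } → A) : rC Q (glue Q t z) = z :=
  funext fun i => dif_neg i.2

lemma glue_rQ_rC (Q : Finset (Fin n)) (x : Fin n → A) : glue Q (rQ Q x) (rC Q x) = x := by
  funext i; unfold glue rQ rC; split <;> rfl

lemma glue_eq_iff {Q : Finset (Fin n)} {t : { i : Fin n // i ∈ Q } → A}
    {z : { i : Fin n // i ∉ Q } → A} {x : Fin n → A} :
    glue Q t z = x ↔ t = rQ Q x ∧ z = rC Q x := by
  constructor
  · rintro rfl; exact ⟨(rQ_glue Q t z).symm, (rC_glue Q t z).symm⟩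
  · rintro ⟨rfl, rfl⟩; exact glue_rQ_rC Q x

lemma tvec_apply (P : UTerm A n k) (j : Fin P.J) (z : { i : Fin n // i ∉ P.Q } → A)
    (x : Fin n → A) :
    P.tvec j z x = if rQ P.Q x ∈ P.T j ∧ rC P.Q x = z
      then ((Real.sqrt (P.T j).card : ℂ))⁻¹ else 0 := by
  unfold UTerm.tvec
  simp only [Pi.smul_apply, Finset.sum_apply, smul_eq_mul]
  have : (∑ t ∈ P.T j, (Pi.single (glue P.Q t z) (1 : ℂ) : (Fin n → A) → ℂ) x)
      = if rQ P.Q x ∈ P.T j ∧ rC P.Q x = z then 1 else 0 := by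
    have h1 : ∀ t, (Pi.single (glue P.Q t z) (1 : ℂ) : (Fin n → A) → ℂ) x
        = if t = rQ P.Q x ∧ rC P.Q x = z then 1 else 0 := by
      intro t
      have hiff : (x = glue P.Q t z) ↔ (t = rQ P.Q x ∧ rC P.Q x = z) := by
        rw [eq_comm, glue_eq_iff]
        constructor
        · rintro ⟨h1, h2⟩; exact ⟨h1, h2.symm⟩
        · rintro ⟨h1, h2⟩; exact ⟨h1, h2.symm⟩
      simp only [Pi.single_apply, hiff]
    simp only [h1]
    by_cases hz : rC P.Q x = z
    · simp only [hz, and_true]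
      rw [Finset.sum_ite_eq' (P.T j) (rQ P.Q x) (fun _ => (1 : ℂ))]
    · simp [hz]
  rw [this]
  split <;> simp

lemma dot_tvec (P : UTerm A n k) (j : Fin P.J) (z : { i : Fin n // i ∉ P.Q } → A)
    (φ : (Fin n → A) → ℂ) :
    (star (P.tvec j z)) ⬝ᵥ φ
      = ((Real.sqrt (P.T j).card : ℂ))⁻¹ * ∑ t ∈ P.T j, φ (glue P.Q t z) := by
  unfold dotProduct
  simp only [Pi.star_apply, tvec_apply]
  have : ∀ y : Fin n → A,
      star (if rQ P.Q y ∈ P.T j ∧ rC P.Q y = z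
        then ((Real.sqrt (P.T j).card : ℂ))⁻¹ else 0) * φ y
      = if rQ P.Q y ∈ P.T j ∧ rC P.Q y = z
        then ((Real.sqrt (P.T j).card : ℂ))⁻¹ * φ y else 0 := by
    intro y
    split
    · simp
    · simp
  simp only [this]
  rw [Finset.mul_sum, Finset.sum_ite, Finset.sum_const_zero, add_zero]
  apply Finset.sum_nbij' (rQ P.Q) (fun t => glue P.Q t z)
  · intro y hy
    simp only [Finset.mem_filter, Finset.mem_univ, true_and] at hy
    exact hy.1
  · intro t ht
    simp only [Finset.mem_filter, Finset.mem_univ, true_and, rQ_glue, rC_glue]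
    exact ⟨ht, trivial⟩
  · intro y hy
    simp only [Finset.mem_filter, Finset.mem_univ, true_and] at hy
    rw [← hy.2, glue_rQ_rC]
  · intro t _; rw [rQ_glue]
  · intro y hy
    simp only [Finset.mem_filter, Finset.mem_univ, true_and] at hy
    rw [← hy.2, glue_rQ_rC]

lemma proj_mulVec_apply (P : UTerm A n k) (φ : (Fin n → A) → ℂ) (x : Fin n → A) :
    P.proj.mulVec φ x = ∑ j : Fin P.J,
      if rQ P.Q x ∈ P.T j
        then (((P.T j).card : ℂ))⁻¹ * ∑ t ∈ P.T j, φ (glue P.Q t (rC P.Q x))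
        else 0 := by
  have hproj : ∀ y, P.proj x y = ∑ j : Fin P.J, ∑ z : { i : Fin n // i ∉ P.Q } → A,
      P.tvec j z x * star (P.tvec j z) y := by
    intro y
    simp [UTerm.proj, Matrix.sum_apply, vecMulVec_apply]
  simp only [Matrix.mulVec, dotProduct, hproj, Finset.sum_mul]
  rw [Finset.sum_comm]
  refine Finset.sum_congr rfl fun j _ => ?_
  rw [Finset.sum_comm]
  have hz : ∀ z, (∑ y, P.tvec j z x * star (P.tvec j z) y * φ y)
      = P.tvec j z x * ((star (P.tvec j z)) ⬝ᵥ φ) := by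
    intro z
    rw [dotProduct, Finset.mul_sum]
    refine Finset.sum_congr rfl fun y _ => ?_
    rw [Pi.star_apply, mul_assoc]
  simp only [hz]
  rw [Finset.sum_eq_single (rC P.Q x)]
  · rw [tvec_apply, dot_tvec]
    simp only [and_true]
    split
    · rw [← mul_assoc, ← mul_inv, ← Complex.ofReal_mul,
        Real.mul_self_sqrt (by positivity), Complex.ofReal_natCast]
    · simp
  · intro z _ hzne
    rw [tvec_apply, if_neg (fun h => hzne h.2.symm), zero_mul]
  · intro h; exact absurd (Finset.mem_univ _) h

theorem stmt6' {A : Type} [Fintype A] [DecidableEq A]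
    {n k m : ℕ}
    (terms : Fin m → UTerm A n k)
    (ψ : (Fin n → A) → ℂ)
    (hfix : ∀ i, (terms i).proj.mulVec ψ = ψ)
    (S : Finset (Fin n → A)) (hS : ↑S = {x | ψ x ≠ 0}) :
    ∀ i, (terms i).proj.mulVec (subsetState S) = subsetState S := by
  intro i
  set P := terms i with hP
  have key : ∀ y, ψ y = ∑ j : Fin P.J,
      (if rQ P.Q y ∈ P.T j
        then (((P.T j).card : ℂ))⁻¹ * ∑ t ∈ P.T j, ψ (glue P.Q t (rC P.Q y))
        else 0) := by
    intro y
    conv_lhs => rw [← hfix i]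
    exact proj_mulVec_apply P ψ y
  have hmem : ∀ y, y ∈ S ↔ ψ y ≠ 0 := by
    intro y
    rw [← Finset.mem_coe, hS]; rfl
  have keyj : ∀ (j : Fin P.J), ∀ y, rQ P.Q y ∈ P.T j →
      ψ y = (((P.T j).card : ℂ))⁻¹ * ∑ t ∈ P.T j, ψ (glue P.Q t (rC P.Q y)) := by
    intro j y hy
    rw [key y, Finset.sum_eq_single j]
    · rw [if_pos hy]
    · intro j' _ hne
      rw [if_neg (fun h => Finset.disjoint_left.mp (P.hdisj j' j hne) h hy)]
    · intro h; exact absurd (Finset.mem_univ _) h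
  funext x
  rw [proj_mulVec_apply]
  by_cases hj : ∃ j, rQ P.Q x ∈ P.T j
  · obtain ⟨j, hjx⟩ := hj
    rw [Finset.sum_eq_single j]
    · rw [if_pos hjx]
      have hconst : ∀ t ∈ P.T j, ψ (glue P.Q t (rC P.Q x)) = ψ x := by
        intro t ht
        have h1 := keyj j (glue P.Q t (rC P.Q x)) (by rw [rQ_glue]; exact ht)
        have h2 := keyj j x hjx
        rw [h1, h2, rC_glue]
      have hsub : ∀ t ∈ P.T j, subsetState S (glue P.Q t (rC P.Q x)) = subsetState S x := by
        intro t ht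
        have : glue P.Q t (rC P.Q x) ∈ S ↔ x ∈ S := by
          rw [hmem, hmem, hconst t ht]
        unfold subsetState
        by_cases hx : x ∈ S
        · rw [if_pos (this.mpr hx), if_pos hx]
        · rw [if_neg (fun h => hx (this.mp h)), if_neg hx]
      rw [Finset.sum_congr rfl hsub, Finset.sum_const, nsmul_eq_mul, ← mul_assoc,
        inv_mul_cancel₀, one_mul]
      exact_mod_cast (P.hT j).card_pos.ne'
    · intro j' _ hne
      rw [if_neg (fun h => Finset.disjoint_left.mp (P.hdisj j' j hne) h hjx)]
    · intro h; exact absurd (Finset.mem_univ _) h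
  · push_neg at hj
    rw [Finset.sum_eq_zero (fun j _ => if_neg (hj j))]
    have hx0 : ψ x = 0 := by
      rw [key x, Finset.sum_eq_zero (fun j _ => if_neg (hj j))]
    rw [subsetState, if_neg (fun h => (hmem x).mp h hx0)]

/-- If `ψ` is a nonzero frustration-free groundstate of a uniform stoquastic local Hamiltonian,
then the subset state of its support is also a frustration-free groundstate. -/
theorem stmt6 {A : Type} [Fintype A] [DecidableEq A] (hA : 2 ≤ Fintype.card A)
    {n k d m : ℕ} (hn : 1 ≤ n) (hk : 1 ≤ k) (hd : 1 ≤ d) (hm : 1 ≤ m)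
    (terms : Fin m → UTerm A n k)
    (ψ : (Fin n → A) → ℂ) (hψ : ψ ≠ 0)
    (hfix : ∀ i, (terms i).proj.mulVec ψ = ψ)
    (S : Finset (Fin n → A)) (hS : ↑S = {x | ψ x ≠ 0}) :
    ∀ i, (terms i).proj.mulVec (subsetState S) = subsetState S :=
  stmt6' terms ψ hfix S hS
end

section
/- Let {T_j}_{j∈J} be a finite family of pairwise disjoint nonempty finite subsets of a set X, let S be a nonempty finite subset of X with S ⊆ ⋃_j T_j, and let δ ∈ [0,1] satisfy Σ_{j∈J} |T_j ∩ S|² / (|T_j| · |S|) ≤ 1 − δ. Then |⋃_{j : T_j ∩ S ≠ ∅} T_j| ≥ (1 + δ/2) · |S|. (Equivalently: if P̃ = Σ_j |T_j⟩⟨T_j| is a uniform stoquastic projector, S contains no P̃-bad strings, and ‖P̃|S⟩‖² ≤ 1 − δ, then the support of P̃|S⟩ has size at least (1 + δ/2)|S|.) -/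
/-! Write `a_j = |T_j ∩ S|` and `t_j = |T_j|`. Since `(a_j - t_j)² ≥ 0`, each term obeys
`a_j² / t_j ≥ 2 a_j - t_j`. Summing over the sets that meet `S`, disjointness and the covering
hypothesis turn `Σ a_j` into `|S|` and `Σ t_j` into the size of the union, so
`(1 - δ)|S| ≥ 2|S| - |⋃ T_j|`, which is even `(1 + δ)|S| ≤ |⋃ T_j|`. -/

open Finset Function

lemma two_mul_sub_le_sq_div {a t : ℝ} (ht : 0 < t) : 2 * a - t ≤ a ^ 2 / t := by
  rw [le_div_iff₀ ht]
  nlinarith [sq_nonneg (a - t)]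

section

variable {X J : Type*} [DecidableEq X] [Fintype J] (T : J → Finset X) (S : Finset X)

lemma sum_card_inter_eq_card (hdisj : Pairwise (Disjoint on T))
    (hcover : ∀ x ∈ S, ∃ j, x ∈ T j) : ∑ j, #(T j ∩ S) = #S := by
  rw [← card_biUnion fun i _ j _ hij => (hdisj hij).mono inter_subset_left inter_subset_left]
  congr 1
  ext x
  simp only [mem_biUnion, mem_univ, mem_inter, true_and]
  exact ⟨fun ⟨_, _, hx⟩ => hx, fun hx => (hcover x hx).imp fun _ hj => ⟨hj, hx⟩⟩

lemma two_mul_card_sub_sum_le_card_biUnion (hdisj : Pairwise (Disjoint on T))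
    (hcover : ∀ x ∈ S, ∃ j, x ∈ T j) :
    2 * (#S : ℝ) - ∑ j, (#(T j ∩ S) : ℝ) ^ 2 / #(T j) ≤
      #(({j | (T j ∩ S).Nonempty} : Finset J).biUnion T) := by
  set F : Finset J := {j | (T j ∩ S).Nonempty}
  have hunion : (#(F.biUnion T) : ℝ) = ∑ j ∈ F, (#(T j) : ℝ) := by
    exact_mod_cast card_biUnion fun i _ j _ hij => hdisj hij
  have hcard : (#S : ℝ) = ∑ j ∈ F, (#(T j ∩ S) : ℝ) := by
    rw [← sum_card_inter_eq_card T S hdisj hcover,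
      ← sum_filter_of_ne fun j _ h => card_ne_zero.mp h]
    exact Nat.cast_sum F _
  have hrestrict : ∑ j ∈ F, (#(T j ∩ S) : ℝ) ^ 2 / #(T j) ≤ ∑ j, (#(T j ∩ S) : ℝ) ^ 2 / #(T j) :=
    sum_le_sum_of_subset_of_nonneg (subset_univ F) fun _ _ _ => by positivity
  have htermwise : ∀ j ∈ F, 2 * (#(T j ∩ S) : ℝ) - #(T j) ≤ (#(T j ∩ S) : ℝ) ^ 2 / #(T j) :=
    fun j hj => two_mul_sub_le_sq_div <| Nat.cast_pos.mpr <| card_pos.mpr <|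
      (mem_filter.mp hj).2.mono inter_subset_left
  have hsummed := sum_le_sum htermwise
  rw [sum_sub_distrib, ← mul_sum] at hsummed
  linarith

end

theorem stmt7_general {X : Type} [DecidableEq X] {J : Type} [Fintype J]
    (T : J → Finset X)
    (hdisj : ∀ j j', j ≠ j' → Disjoint (T j) (T j'))
    (S : Finset X) (hSne : S.Nonempty)
    (hcover : ∀ x ∈ S, ∃ j, x ∈ T j)
    (δ : ℝ) (hδ0 : 0 ≤ δ)
    (hfrust : ∑ j, ((T j ∩ S).card : ℝ) ^ 2 / (((T j).card : ℝ) * (S.card : ℝ)) ≤ 1 - δ) :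
    (1 + δ / 2) * (S.card : ℝ) ≤
      (((Finset.univ.filter (fun j => (T j ∩ S).Nonempty)).biUnion T).card : ℝ) := by
  have hS : (0 : ℝ) < #S := Nat.cast_pos.mpr hSne.card_pos
  have hsum : ∑ j, (#(T j ∩ S) : ℝ) ^ 2 / #(T j) ≤ (1 - δ) * #S := by
    rw [← div_le_iff₀ hS, sum_div]
    simpa only [div_div] using hfrust
  have hexpand := two_mul_card_sub_sum_le_card_biUnion T S (fun j j' h => hdisj j j' h) hcover
  nlinarith [mul_nonneg hδ0 hS.le]

/-- One-term expansion: if a nonempty set `S` is covered by the pairwise disjoint nonempty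
sets `T_j` and `Σ_j |T_j ∩ S|²/(|T_j||S|) ≤ 1 - δ`, then the union of the sets `T_j` meeting
`S` has size at least `(1 + δ/2)|S|`. -/
theorem stmt7 {X : Type} [DecidableEq X] {J : Type} [Fintype J]
    (T : J → Finset X)
    (hne : ∀ j, (T j).Nonempty)
    (hdisj : ∀ j j', j ≠ j' → Disjoint (T j) (T j'))
    (S : Finset X) (hSne : S.Nonempty)
    (hcover : ∀ x ∈ S, ∃ j, x ∈ T j)
    (δ : ℝ) (hδ0 : 0 ≤ δ) (hδ1 : δ ≤ 1)
    (hfrust : ∑ j, ((T j ∩ S).card : ℝ) ^ 2 / (((T j).card : ℝ) * (S.card : ℝ)) ≤ 1 - δ) :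
    (1 + δ / 2) * (S.card : ℝ) ≤
      (((Finset.univ.filter (fun j => (T j ∩ S).Nonempty)).biUnion T).card : ℝ) :=
  stmt7_general T hdisj S hSne hcover δ hδ0 hfrust
end

section
/- Let P̃_1, …, P̃_m be stoquastic projectors on a finite type X, set H = (1/m) Σ_{i=1}^m (I − P̃_i), and let ψ be a non-negative unit vector on ℂ^X. Let B = {x ∈ X : (P̃_i)_{xx} = 0 for some i} be the set of bad strings for H. Then Σ_{x∈B} ψ_x² ≤ m · ⟨ψ|H|ψ⟩. -/
open Matrix Classical

lemma key_ineq {X : Type} [Fintype X] [DecidableEq X] (P : Matrix X X ℂ)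
    (h : IsStoqProj P) (ψ : X → ℂ) :
    ∑ x ∈ Finset.univ.filter (fun x => P x x = 0), Complex.normSq (ψ x) ≤
      (star ψ ⬝ᵥ (1 - P).mulVec ψ).re := by
  obtain ⟨hHerm, hIdem, r, φ, hφnn, -, -, hPd⟩ := h
  set Q : Matrix X X ℂ := 1 - P with hQ
  have hQHerm : Qᴴ = Q := by
    simp [hQ, conjTranspose_sub, hHerm.eq]
  have hQIdem : Q * Q = Q := by
    simp only [hQ, Matrix.sub_mul, Matrix.mul_sub, Matrix.one_mul, Matrix.mul_one, hIdem]
    abel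
  -- ⟨ψ, Qψ⟩ = ⟨Qψ, Qψ⟩
  have hquad : star ψ ⬝ᵥ Q.mulVec ψ = star (Q.mulVec ψ) ⬝ᵥ (Q.mulVec ψ) := by
    conv_lhs => rw [← hQIdem]
    rw [← Matrix.mulVec_mulVec, Matrix.dotProduct_mulVec,
      show star ψ ᵥ* Q = star (Q.mulVec ψ) by rw [Matrix.star_mulVec, hQHerm]]
  -- on bad x, (Pψ) x = 0 so (Qψ) x = ψ x
  have hfix : ∀ x, P x x = 0 → Q.mulVec ψ x = ψ x := by
    intro x hx
    have hφ0 : ∀ j, φ j x = 0 := by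
      have hdiag : (∑ j, Complex.normSq (φ j x)) = 0 := by
        have h1 : (∑ j, vecMulVec (φ j) (star (φ j))) x x = 0 := by rw [← hPd]; exact hx
        have h2 : ((∑ j, Complex.normSq (φ j x) : ℝ) : ℂ) = 0 := by
          rw [← h1]
          simp [Matrix.sum_apply, vecMulVec_apply, Pi.star_apply, Complex.mul_conj,
            Complex.ofReal_sum]
        exact_mod_cast h2
      intro j
      have := (Finset.sum_eq_zero_iff_of_nonneg (fun j _ => Complex.normSq_nonneg _)).mp
        hdiag j (Finset.mem_univ j)
      exact Complex.normSq_eq_zero.mp this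
    have hPψ : P.mulVec ψ x = 0 := by
      rw [hPd]
      simp only [Matrix.mulVec, dotProduct, Matrix.sum_apply, vecMulVec_apply,
        Pi.star_apply]
      refine Finset.sum_eq_zero fun y _ => ?_
      rw [Finset.sum_eq_zero fun j _ => by rw [hφ0 j]; ring]
      ring
    simp [hQ, Matrix.sub_mulVec, hPψ]
  rw [hquad]
  have : (star (Q.mulVec ψ) ⬝ᵥ (Q.mulVec ψ)).re = ∑ x, Complex.normSq (Q.mulVec ψ x) := by
    simp only [dotProduct, Pi.star_apply, Complex.re_sum]
    exact Finset.sum_congr rfl fun x _ => by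
      rw [RCLike.star_def, mul_comm, Complex.mul_conj, Complex.ofReal_re]
  rw [this]
  calc ∑ x ∈ Finset.univ.filter (fun x => P x x = 0), Complex.normSq (ψ x)
      = ∑ x ∈ Finset.univ.filter (fun x => P x x = 0), Complex.normSq (Q.mulVec ψ x) := by
        refine Finset.sum_congr rfl fun x hx => ?_
        rw [hfix x (Finset.mem_filter.mp hx).2]
    _ ≤ ∑ x, Complex.normSq (Q.mulVec ψ x) :=
        Finset.sum_le_sum_of_subset_of_nonneg (Finset.filter_subset _ _)
          (fun x _ _ => Complex.normSq_nonneg _)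

lemma sum_biUnion_le' {ι α : Type*} [DecidableEq α] (s : Finset ι) (t : ι → Finset α)
    (f : α → ℝ) (hf : ∀ a, 0 ≤ f a) :
    ∑ x ∈ s.biUnion t, f x ≤ ∑ i ∈ s, ∑ x ∈ t i, f x := by
  induction s using Finset.induction with
  | empty => simp
  | @insert i s hi ih =>
    rw [Finset.biUnion_insert, Finset.sum_insert hi]
    have h1 : ∑ x ∈ t i ∪ s.biUnion t, f x ≤ ∑ x ∈ t i, f x + ∑ x ∈ s.biUnion t, f x := by
      have := Finset.sum_union_inter (s₁ := t i) (s₂ := s.biUnion t) (f := f)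
      have h2 : 0 ≤ ∑ x ∈ t i ∩ s.biUnion t, f x := Finset.sum_nonneg fun x _ => hf x
      linarith
    exact h1.trans (by linarith [ih])

/-- The total weight of bad strings in a non-negative unit vector `ψ` is at most `m` times
the energy of `ψ` with respect to `H = (1/m) Σᵢ (I - P̃ᵢ)`. -/
theorem stmt15 {X : Type} [Fintype X] [DecidableEq X] {m : ℕ} (hm : 1 ≤ m)
    (P : Fin m → Matrix X X ℂ) (hP : ∀ i, IsStoqProj (P i))
    (H : Matrix X X ℂ) (hH : H = ((m : ℂ))⁻¹ • ∑ i, (1 - P i))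
    (ψ : X → ℂ) (hψnn : ∀ x, (ψ x).im = 0 ∧ 0 ≤ (ψ x).re)
    (hψunit : ∑ x, ‖ψ x‖ ^ 2 = 1) :
    ∑ x ∈ Finset.univ.filter (fun x => ∃ i, P i x x = 0), (ψ x).re ^ 2 ≤
      m * (star ψ ⬝ᵥ H.mulVec ψ).re := by
  have hm0 : (m : ℝ) ≠ 0 := by positivity
  have hRHS : (m : ℝ) * (star ψ ⬝ᵥ H.mulVec ψ).re
      = ∑ i, (star ψ ⬝ᵥ (1 - P i).mulVec ψ).re := by
    rw [hH, Matrix.smul_mulVec, dotProduct_smul]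
    have : ((m : ℂ))⁻¹ = ((((m : ℝ))⁻¹ : ℝ) : ℂ) := by
      rw [← Complex.ofReal_natCast, ← Complex.ofReal_inv]
    rw [this, smul_eq_mul, Complex.re_ofReal_mul, ← mul_assoc, mul_inv_cancel₀ hm0,
      one_mul]
    have h1 : (∑ i : Fin m, (1 - P i)) *ᵥ ψ = ∑ i, (1 - P i) *ᵥ ψ := by
      ext x
      simp only [Matrix.mulVec, dotProduct, Matrix.sum_apply, Finset.sum_mul,
        Finset.sum_apply]
      exact Finset.sum_comm
    have h2 : star ψ ⬝ᵥ (∑ i, (1 - P i) *ᵥ ψ) = ∑ i, star ψ ⬝ᵥ ((1 - P i) *ᵥ ψ) := by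
      simp only [dotProduct, Finset.sum_apply, Finset.mul_sum]
      exact Finset.sum_comm
    rw [h1, h2, Complex.re_sum]
  rw [hRHS]
  have hpt : ∀ x, (ψ x).re ^ 2 = Complex.normSq (ψ x) := fun x => by
    rw [Complex.normSq_apply, (hψnn x).1]; ring
  calc ∑ x ∈ Finset.univ.filter (fun x => ∃ i, P i x x = 0), (ψ x).re ^ 2
      = ∑ x ∈ Finset.univ.filter (fun x => ∃ i, P i x x = 0), Complex.normSq (ψ x) :=
        Finset.sum_congr rfl fun x _ => hpt x
    _ ≤ ∑ x ∈ Finset.univ.biUnion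
          (fun i => Finset.univ.filter (fun x => P i x x = 0)), Complex.normSq (ψ x) := by
        refine Finset.sum_le_sum_of_subset_of_nonneg ?_
          (fun x _ _ => Complex.normSq_nonneg _)
        intro x hx
        obtain ⟨i, hi⟩ := (Finset.mem_filter.mp hx).2
        exact Finset.mem_biUnion.mpr ⟨i, Finset.mem_univ i,
          Finset.mem_filter.mpr ⟨Finset.mem_univ x, hi⟩⟩
    _ ≤ ∑ i, ∑ x ∈ Finset.univ.filter (fun x => P i x x = 0), Complex.normSq (ψ x) :=
        sum_biUnion_le' _ _ _ (fun x => Complex.normSq_nonneg _)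
    _ ≤ ∑ i, (star ψ ⬝ᵥ (1 - P i).mulVec ψ).re :=
        Finset.sum_le_sum fun i _ => key_ineq (P i) (hP i) ψ
end

section
/- Let H = (1/m) Σ_{i=1}^m (I − P̃_i) be a uniform stoquastic k-local Hamiltonian and let ψ be a non-negative unit vector on ℂ^(Σ^n). Let N = {x ∈ supp(ψ) : there exist i ∈ {1,…,m} and y ∉ supp(ψ) with ⟨x|P̃_i|y⟩ > 0}. Then ⟨ψ|H|ψ⟩ ≥ (1/(|Σ|^k · m)) · Σ_{x∈N} ψ_x². -/
open Matrix Classical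

variable {A : Type} [Fintype A] [DecidableEq A] {n k : ℕ}

/-!
For each term, the strings split into the disjoint blocks `{x(t, z) : t ∈ T_j}`, and
`⟨ψ|I - P̃|ψ⟩ ≥ Σ_B (Σ_{x∈B} ψ_x² - (Σ_{x∈B} ψ_x)² / |B|)`, a sum of block variances.
A string of `N` witnessed by term `i` shares a block `B` with a zero of `ψ`, and by
Cauchy–Schwarz on the other `|B| - 1` entries the variance of such a block is at least
`Σ_{x∈B} ψ_x² / |B| ≥ Σ_{x∈B} ψ_x² / |Σ|^k`. A union bound over the terms finishes the proof.
-/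

open Finset Function

theorem sum_le_sum_of_subset_biUnion {ι α M : Type*} [AddCommMonoid M] [PartialOrder M]
    [IsOrderedAddMonoid M] [DecidableEq α] {s : Finset α} {I : Finset ι} {t : ι → Finset α}
    {g : α → M} (hg : ∀ x, 0 ≤ g x) (hst : s ⊆ I.biUnion t) :
    ∑ x ∈ s, g x ≤ ∑ i ∈ I, ∑ x ∈ t i, g x := by
  calc ∑ x ∈ s, g x ≤ ∑ x ∈ s, ∑ i ∈ I, if x ∈ t i then g x else 0 := by
        refine sum_le_sum fun x hx => ?_
        obtain ⟨i, hi, hxi⟩ := mem_biUnion.mp (hst hx)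
        calc g x = if x ∈ t i then g x else 0 := (if_pos hxi).symm
          _ ≤ _ := single_le_sum (f := fun i => if x ∈ t i then g x else 0)
              (fun j _ => by split_ifs <;> simp [hg]) hi
    _ = ∑ i ∈ I, ∑ x ∈ s ∩ t i, g x := by
        rw [sum_comm]
        exact sum_congr rfl fun i _ => sum_ite_mem _ _ _
    _ ≤ ∑ i ∈ I, ∑ x ∈ t i, g x :=
        sum_le_sum fun i _ => sum_le_sum_of_subset_of_nonneg inter_subset_right fun x _ _ => hg x

section Variance

variable {X : Type*}

theorem inv_card_mul_sq_sum_le_sum_sq (S : Finset X) (f : X → ℝ) :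
    (#S : ℝ)⁻¹ * (∑ x ∈ S, f x) ^ 2 ≤ ∑ x ∈ S, f x ^ 2 := by
  rcases S.eq_empty_or_nonempty with rfl | hS
  · simp
  rw [inv_mul_le_iff₀ (by exact_mod_cast hS.card_pos)]
  exact sq_sum_le_card_mul_sum_sq

/-- Cauchy–Schwarz on the `#S - 1` entries other than the zero. -/
theorem inv_mul_sum_sq_le_of_mem_of_eq_zero [DecidableEq X] {S : Finset X} (f : X → ℝ)
    {y : X} (hy : y ∈ S) (hfy : f y = 0) {D : ℝ} (hD : (#S : ℝ) ≤ D) :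
    D⁻¹ * ∑ x ∈ S, f x ^ 2 ≤ ∑ x ∈ S, f x ^ 2 - (#S : ℝ)⁻¹ * (∑ x ∈ S, f x) ^ 2 := by
  have hcard : (1 : ℝ) ≤ #S := by exact_mod_cast card_pos.mpr ⟨y, hy⟩
  have hCS : (∑ x ∈ S, f x) ^ 2 ≤ (#S - 1 : ℝ) * ∑ x ∈ S, f x ^ 2 := by
    calc (∑ x ∈ S, f x) ^ 2 = (∑ x ∈ S.erase y, f x) ^ 2 := by
          rw [sum_erase _ hfy]
      _ ≤ #(S.erase y) * ∑ x ∈ S.erase y, f x ^ 2 := sq_sum_le_card_mul_sum_sq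
      _ ≤ (#S - 1 : ℝ) * ∑ x ∈ S, f x ^ 2 := by
          rw [card_erase_of_mem hy, Nat.cast_pred (card_pos.mpr ⟨y, hy⟩)]
          gcongr
          exact erase_subset _ _
  calc D⁻¹ * ∑ x ∈ S, f x ^ 2 ≤ (#S : ℝ)⁻¹ * ∑ x ∈ S, f x ^ 2 := by gcongr
    _ ≤ _ := by
        rw [inv_mul_le_iff₀ (by linarith), mul_sub, mul_inv_cancel_left₀ (by linarith)]
        linarith

theorem sum_sum_sq_le_of_pairwise_disjoint {ι : Type*} [Fintype ι] [Fintype X] [DecidableEq X]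
    {B : ι → Finset X} (hB : Pairwise (Disjoint on B)) (f : X → ℝ) :
    ∑ i, ∑ x ∈ B i, f x ^ 2 ≤ ∑ x, f x ^ 2 := by
  rw [← sum_biUnion (hB.set_pairwise _)]
  exact sum_le_univ_sum_of_nonneg fun x => sq_nonneg _

theorem inv_mul_sum_sq_le_sum_variance {ι : Type*} [Fintype ι] [Fintype X] [DecidableEq X]
    {B : ι → Finset X} (hB : Pairwise (Disjoint on B)) (f : X → ℝ) {D : ℝ} (hD0 : 0 ≤ D)
    (hD : ∀ i, (#(B i) : ℝ) ≤ D) {N : Finset X}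
    (hN : ∀ x ∈ N, ∃ i, x ∈ B i ∧ ∃ y ∈ B i, f y = 0) :
    D⁻¹ * ∑ x ∈ N, f x ^ 2 ≤ ∑ x, f x ^ 2 - ∑ i, (#(B i) : ℝ)⁻¹ * (∑ x ∈ B i, f x) ^ 2 := by
  set bad := univ.filter fun i => ∃ y ∈ B i, f y = 0
  have hcover : N ⊆ bad.biUnion B := fun x hx => by
    obtain ⟨i, hxi, hbad⟩ := hN x hx
    exact mem_biUnion.mpr ⟨i, mem_filter.mpr ⟨mem_univ i, hbad⟩, hxi⟩
  calc D⁻¹ * ∑ x ∈ N, f x ^ 2 ≤ D⁻¹ * ∑ i ∈ bad, ∑ x ∈ B i, f x ^ 2 := by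
        gcongr
        exact sum_le_sum_of_subset_biUnion (fun x => sq_nonneg _) hcover
    _ = ∑ i ∈ bad, D⁻¹ * ∑ x ∈ B i, f x ^ 2 := mul_sum _ _ _
    _ ≤ ∑ i ∈ bad, (∑ x ∈ B i, f x ^ 2 - (#(B i) : ℝ)⁻¹ * (∑ x ∈ B i, f x) ^ 2) := by
        refine sum_le_sum fun i hi => ?_
        obtain ⟨y, hy, hfy⟩ := (mem_filter.mp hi).2
        exact inv_mul_sum_sq_le_of_mem_of_eq_zero f hy hfy (hD i)
    _ ≤ ∑ i, (∑ x ∈ B i, f x ^ 2 - (#(B i) : ℝ)⁻¹ * (∑ x ∈ B i, f x) ^ 2) :=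
        sum_le_univ_sum_of_nonneg fun i =>
          sub_nonneg.mpr (inv_card_mul_sq_sum_le_sum_sq _ _)
    _ ≤ _ := by
        rw [sum_sub_distrib]
        gcongr
        exact sum_sum_sq_le_of_pairwise_disjoint hB f

end Variance

section SubsetState

variable {X : Type} [DecidableEq X]

theorem star_subsetState (S : Finset X) : star (subsetState S) = subsetState S := by
  ext x
  simp only [subsetState, Pi.star_apply]
  split_ifs <;> simp [← Complex.ofReal_inv]

theorem mem_of_subsetState_ne_zero {S : Finset X} {x : X} (hx : subsetState S x ≠ 0) :
    x ∈ S := by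
  by_contra h
  exact hx (if_neg h)

theorem subsetState_dotProduct_ofReal [Fintype X] (S : Finset X) (f : X → ℝ) :
    subsetState S ⬝ᵥ (fun x => (f x : ℂ)) = (((Real.sqrt #S)⁻¹ * ∑ x ∈ S, f x : ℝ) : ℂ) := by
  simp [subsetState, dotProduct, ite_mul, sum_ite_mem, mul_sum]

theorem re_dotProduct_vecMulVec_subsetState_mulVec [Fintype X] (S : Finset X) (f : X → ℝ) :
    (star (fun x => (f x : ℂ)) ⬝ᵥ
        vecMulVec (subsetState S) (star (subsetState S)) *ᵥ fun x => (f x : ℂ)).re =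
      (#S : ℝ)⁻¹ * (∑ x ∈ S, f x) ^ 2 := by
  have hf : star (fun x => (f x : ℂ)) = fun x => (f x : ℂ) := by
    ext x; exact Complex.conj_ofReal _
  rw [dotProduct_mulVec, hf, vecMul_vecMulVec, star_subsetState, smul_dotProduct, smul_eq_mul,
    dotProduct_comm, subsetState_dotProduct_ofReal, ← Complex.ofReal_mul, Complex.ofReal_re,
    ← sq, mul_pow, inv_pow, Real.sq_sqrt (Nat.cast_nonneg _)]

end SubsetState

theorem eq_and_eq_of_glue_eq {α : Type} {Q : Finset (Fin n)} {t t' : { i : Fin n // i ∈ Q } → α}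
    {z z' : { i : Fin n // i ∉ Q } → α} (h : glue Q t z = glue Q t' z') : t = t' ∧ z = z' :=
  ⟨funext fun i => by simpa [glue, i.2] using congrFun h i,
    funext fun i => by simpa [glue, i.2] using congrFun h i⟩

namespace UTerm

variable (P : UTerm A n k)

def block (p : Fin P.J × ({ i : Fin n // i ∉ P.Q } → A)) : Finset (Fin n → A) :=
  (P.T p.1).image fun t => glue P.Q t p.2

theorem card_block (p : Fin P.J × ({ i : Fin n // i ∉ P.Q } → A)) :
    #(P.block p) = #(P.T p.1) :=
  card_image_of_injective _ fun _ _ h => (eq_and_eq_of_glue_eq h).1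

theorem pairwise_disjoint_block : Pairwise (Disjoint on P.block) := by
  rintro ⟨j, z⟩ ⟨j', z'⟩ hne
  refine disjoint_left.mpr fun x hx hx' => hne ?_
  obtain ⟨t, ht, rfl⟩ := mem_image.mp hx
  obtain ⟨t', ht', heq⟩ := mem_image.mp hx'
  obtain ⟨rfl, rfl⟩ := eq_and_eq_of_glue_eq heq
  by_contra hjj
  exact disjoint_left.mp (P.hdisj j' j fun h => hjj (by rw [h])) ht' ht

theorem tvec_eq_subsetState (j : Fin P.J) (z : { i : Fin n // i ∉ P.Q } → A) :
    P.tvec j z = subsetState (P.block (j, z)) := by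
  ext x
  rw [UTerm.tvec, ← sum_image (f := fun x' => (Pi.single x' 1 : (Fin n → A) → ℂ))
    fun _ _ _ _ h => (eq_and_eq_of_glue_eq h).1]
  simp only [Pi.smul_apply, Finset.sum_apply, sum_pi_single, subsetState, ← P.card_block (j, z),
    smul_eq_mul]
  change (_ * if x ∈ P.block (j, z) then _ else _) = _
  split_ifs <;> simp

theorem proj_eq_sum :
    P.proj = ∑ p, vecMulVec (subsetState (P.block p)) (star (subsetState (P.block p))) := by
  simp only [UTerm.proj, tvec_eq_subsetState]
  exact (Fintype.sum_prod_type fun p =>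
    vecMulVec (subsetState (P.block p)) (star (subsetState (P.block p)))).symm

theorem exists_mem_block_of_proj_ne_zero {x y : Fin n → A} (h : P.proj x y ≠ 0) :
    ∃ p, x ∈ P.block p ∧ y ∈ P.block p := by
  rw [proj_eq_sum, Matrix.sum_apply] at h
  obtain ⟨p, -, hp⟩ := exists_ne_zero_of_sum_ne_zero h
  rw [vecMulVec_apply, star_subsetState] at hp
  exact ⟨p, mem_of_subsetState_ne_zero (left_ne_zero_of_mul hp),
    mem_of_subsetState_ne_zero (right_ne_zero_of_mul hp)⟩

theorem card_T_le (hA : 0 < Fintype.card A) (j : Fin P.J) :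
    (#(P.T j) : ℝ) ≤ (Fintype.card A : ℝ) ^ k := by
  have hcard : #(P.T j) ≤ Fintype.card A ^ #P.Q := by
    simpa using card_le_univ (P.T j)
  exact_mod_cast hcard.trans (Nat.pow_le_pow_right hA P.hQ)

theorem re_dotProduct_one_sub_proj_mulVec (f : (Fin n → A) → ℝ) :
    (star (fun x => (f x : ℂ)) ⬝ᵥ (1 - P.proj) *ᵥ fun x => (f x : ℂ)).re =
      ∑ x, f x ^ 2 - ∑ p, (#(P.block p) : ℝ)⁻¹ * (∑ x ∈ P.block p, f x) ^ 2 := by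
  rw [sub_mulVec, one_mulVec, dotProduct_sub, proj_eq_sum, sum_mulVec, dotProduct_sum,
    Complex.sub_re, Complex.re_sum]
  simp only [re_dotProduct_vecMulVec_subsetState_mulVec]
  congr 1
  simp [dotProduct, sq]

theorem inv_pow_mul_sum_sq_le_energy (hA : 0 < Fintype.card A) (f : (Fin n → A) → ℝ)
    {N : Finset (Fin n → A)} (hN : ∀ x ∈ N, ∃ y, f y = 0 ∧ P.proj x y ≠ 0) :
    ((Fintype.card A : ℝ) ^ k)⁻¹ * ∑ x ∈ N, f x ^ 2 ≤
      (star (fun x => (f x : ℂ)) ⬝ᵥ (1 - P.proj) *ᵥ fun x => (f x : ℂ)).re := by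
  rw [re_dotProduct_one_sub_proj_mulVec]
  refine inv_mul_sum_sq_le_sum_variance P.pairwise_disjoint_block f (by positivity)
    (fun p => P.card_block p ▸ P.card_T_le hA p.1) fun x hx => ?_
  obtain ⟨y, hy, hxy⟩ := hN x hx
  obtain ⟨p, hxp, hyp⟩ := P.exists_mem_block_of_proj_ne_zero hxy
  exact ⟨p, hxp, y, hyp, hy⟩

end UTerm

theorem re_dotProduct_ham_mulVec {m : ℕ} (terms : Fin m → UTerm A n k) (v : (Fin n → A) → ℂ) :
    (star v ⬝ᵥ ham terms *ᵥ v).re = (m : ℝ)⁻¹ * ∑ i, (star v ⬝ᵥ (1 - (terms i).proj) *ᵥ v).re := by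
  rw [ham, smul_mulVec, dotProduct_smul, sum_mulVec, dotProduct_sum, smul_eq_mul,
    ← Complex.ofReal_natCast, ← Complex.ofReal_inv, Complex.re_ofReal_mul, Complex.re_sum]

theorem stmt16_general {A : Type} [Fintype A] [DecidableEq A] (hA : 2 ≤ Fintype.card A)
    {n k m : ℕ} (terms : Fin m → UTerm A n k)
    (ψ : (Fin n → A) → ℂ) (hψnn : ∀ x, (ψ x).im = 0 ∧ 0 ≤ (ψ x).re) :
    (((Fintype.card A : ℝ) ^ k * m))⁻¹ *
      ∑ x ∈ Finset.univ.filter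
        (fun x => ψ x ≠ 0 ∧ ∃ i, ∃ y, ψ y = 0 ∧ 0 < ((terms i).proj x y).re),
        (ψ x).re ^ 2 ≤
      (star ψ ⬝ᵥ (ham terms).mulVec ψ).re := by
  obtain ⟨f, rfl⟩ : ∃ f : (Fin n → A) → ℝ, ψ = fun x => (f x : ℂ) :=
    ⟨fun x => (ψ x).re, funext fun x => Complex.ext rfl (hψnn x).1⟩
  set N := univ.filter
    fun x => (f x : ℂ) ≠ 0 ∧ ∃ i, ∃ y, (f y : ℂ) = 0 ∧ 0 < ((terms i).proj x y).re
  set boundary := fun i => N.filter fun x => ∃ y, f y = 0 ∧ (terms i).proj x y ≠ 0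
  have hcover : N ⊆ univ.biUnion boundary := fun x hx => by
    obtain ⟨-, i, y, hy, hpos⟩ := (mem_filter.mp hx).2
    exact mem_biUnion.mpr ⟨i, mem_univ i, mem_filter.mpr
      ⟨hx, y, Complex.ofReal_eq_zero.mp hy, fun h => by simp [h] at hpos⟩⟩
  simp only [Complex.ofReal_re]
  calc ((Fintype.card A : ℝ) ^ k * m)⁻¹ * ∑ x ∈ N, f x ^ 2
      ≤ (m : ℝ)⁻¹ * ∑ i, ((Fintype.card A : ℝ) ^ k)⁻¹ * ∑ x ∈ boundary i, f x ^ 2 := by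
        rw [← mul_sum, ← mul_assoc, mul_inv, mul_comm (m : ℝ)⁻¹]
        gcongr
        exact sum_le_sum_of_subset_biUnion (fun x => sq_nonneg _) hcover
    _ ≤ _ := by
        rw [re_dotProduct_ham_mulVec]
        gcongr with i
        exact (terms i).inv_pow_mul_sum_sq_le_energy (by omega) f fun x hx =>
          (mem_filter.mp hx).2

/-- Projection on the boundary lower bounds the energy: for a non-negative unit vector `ψ`,
the weight of the strings in `supp(ψ)` connected by some term to a string outside `supp(ψ)`
is at most `|Σ|^k · m` times the energy of `ψ`. -/
theorem stmt16 {A : Type} [Fintype A] [DecidableEq A] (hA : 2 ≤ Fintype.card A)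
    {n k m : ℕ} (hn : 1 ≤ n) (hk : 1 ≤ k) (hm : 1 ≤ m)
    (terms : Fin m → UTerm A n k)
    (ψ : (Fin n → A) → ℂ) (hψnn : ∀ x, (ψ x).im = 0 ∧ 0 ≤ (ψ x).re)
    (hψunit : ∑ x, ‖ψ x‖ ^ 2 = 1) :
    (((Fintype.card A : ℝ) ^ k * m))⁻¹ *
      ∑ x ∈ Finset.univ.filter
        (fun x => ψ x ≠ 0 ∧ ∃ i, ∃ y, ψ y = 0 ∧ 0 < ((terms i).proj x y).re),
        (ψ x).re ^ 2 ≤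
      (star ψ ⬝ᵥ (ham terms).mulVec ψ).re :=
  stmt16_general hA terms ψ hψnn
end

section
/- Let G be a simple graph on a finite vertex set V in which every vertex has degree at most D, where D ≥ 2, let t ≥ 1 be an integer, and let S be a nonempty finite subset of V. Let B = {x ∈ S : some neighbor of x lies outside S}. If |B| · D^(t+2) < |S|, then there exists x ∈ S such that every vertex of G at distance at most t from x belongs to S. -/
open Classical in
/-- Vertices admitting a walk to `b` of length at most `n`. -/
noncomputable def ballTo {V : Type} [Fintype V] (G : SimpleGraph V) (b : V) (n : ℕ) :
    Finset V :=
  Finset.univ.filter (fun x => ∃ w : G.Walk x b, w.length ≤ n)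

lemma mem_ballTo {V : Type} [Fintype V] {G : SimpleGraph V} {b x : V} {n : ℕ} :
    x ∈ ballTo G b n ↔ ∃ w : G.Walk x b, w.length ≤ n := by
  simp [ballTo]

lemma ballTo_card {V : Type} [Fintype V] [DecidableEq V] (G : SimpleGraph V)
    [DecidableRel G.Adj] {D : ℕ} (hD : 2 ≤ D) (hdeg : ∀ v, G.degree v ≤ D)
    (b : V) (n : ℕ) : (ballTo G b n).card ≤ 2 * D ^ n - 1 := by
  induction n with
  | zero =>
    have : ballTo G b 0 ⊆ {b} := by
      intro x hx
      rw [mem_ballTo] at hx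
      obtain ⟨w, hw⟩ := hx
      cases w with
      | nil => simp
      | cons h p => simp at hw
    simpa using Finset.card_le_card this
  | succ n ih =>
    have hsub : ballTo G b (n + 1) ⊆
        insert b ((ballTo G b n).biUnion (fun z => G.neighborFinset z)) := by
      intro x hx
      rw [mem_ballTo] at hx
      obtain ⟨w, hw⟩ := hx
      cases w with
      | nil => simp
      | @cons _ z _ h p =>
        refine Finset.mem_insert_of_mem ?_
        refine Finset.mem_biUnion.2 ⟨z, ?_, ?_⟩
        · exact mem_ballTo.2 ⟨p, by simpa using Nat.lt_succ_iff.mp (Nat.lt_of_lt_of_le (Nat.lt_succ_of_le le_rfl) (by simpa using hw))⟩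
        · simpa using h.symm
    have h1 : (ballTo G b (n + 1)).card ≤
        1 + ((ballTo G b n).biUnion (fun z => G.neighborFinset z)).card := by
      calc (ballTo G b (n + 1)).card ≤ _ := Finset.card_le_card hsub
        _ ≤ _ + 1 := Finset.card_insert_le b _
        _ = 1 + _ := by omega
    have h2 : ((ballTo G b n).biUnion (fun z => G.neighborFinset z)).card ≤
        (ballTo G b n).card * D := by
      calc _ ≤ ∑ z ∈ ballTo G b n, (G.neighborFinset z).card :=
            Finset.card_biUnion_le
        _ ≤ ∑ z ∈ ballTo G b n, D := by
            refine Finset.sum_le_sum fun z _ => ?_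
            exact hdeg z
        _ = (ballTo G b n).card * D := by simp [Finset.sum_const, mul_comm]
    have hDpos : 1 ≤ D ^ n := Nat.one_le_pow _ _ (by omega)
    calc (ballTo G b (n + 1)).card ≤ 1 + (ballTo G b n).card * D := le_trans h1 (by omega)
      _ ≤ 1 + (2 * D ^ n - 1) * D := by
          have := Nat.mul_le_mul_right D ih; omega
      _ ≤ 2 * D ^ (n + 1) - 1 := by
          have h3 : (2 * D ^ n - 1) * D = 2 * D ^ (n+1) - D := by
            rw [Nat.sub_mul, pow_succ]; ring_nf
          rw [h3]
          have : D ≤ 2 * D ^ (n+1) := by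
            have : D ≤ D ^ (n+1) := Nat.le_self_pow (by omega) D
            omega
          omega

lemma walk_to_boundary {V : Type} [Fintype V] {G : SimpleGraph V} {S : Finset V} :
    ∀ {x y : V} (w : G.Walk x y), x ∈ S → y ∉ S →
      ∃ b, (b ∈ S ∧ ∃ z, G.Adj b z ∧ z ∉ S) ∧ ∃ w' : G.Walk x b, w'.length ≤ w.length := by
  intro x y w
  induction w with
  | nil => intro hx hy; exact absurd hx hy
  | @cons a z c h p ih =>
    intro hx hy
    by_cases hz : z ∈ S
    · obtain ⟨b, hb, w', hw'⟩ := ih hz hy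
      exact ⟨b, hb, w'.cons h, by simpa using Nat.succ_le_succ hw'⟩
    · exact ⟨a, ⟨hx, z, h, hz⟩, SimpleGraph.Walk.nil, by simp⟩

/-- If every vertex of a graph has degree at most `D ≥ 2` and the boundary `B` of a nonempty
finite set `S` satisfies `|B| · D^(t+2) < |S|`, then some vertex of `S` has all vertices
within distance `t` inside `S`. -/
theorem stmt19 {V : Type} [Fintype V] [DecidableEq V]
    (G : SimpleGraph V) [DecidableRel G.Adj]
    (D : ℕ) (hD : 2 ≤ D) (hdeg : ∀ v, G.degree v ≤ D)
    (t : ℕ) (ht : 1 ≤ t)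
    (S : Finset V) (hSne : S.Nonempty)
    (hB : (S.filter (fun x => ∃ y, G.Adj x y ∧ y ∉ S)).card * D ^ (t + 2) < S.card) :
    ∃ x ∈ S, ∀ y : V, (∃ w : G.Walk x y, w.length ≤ t) → y ∈ S := by
  set B := S.filter (fun x => ∃ y, G.Adj x y ∧ y ∉ S) with hBdef
  set Bad := B.biUnion (fun b => ballTo G b t) with hBaddef
  have hBadcard : Bad.card ≤ B.card * D ^ (t + 2) := by
    calc Bad.card ≤ ∑ b ∈ B, (ballTo G b t).card := Finset.card_biUnion_le
      _ ≤ ∑ b ∈ B, (2 * D ^ t - 1) :=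
          Finset.sum_le_sum fun b _ => ballTo_card G hD hdeg b t
      _ = B.card * (2 * D ^ t - 1) := by simp [Finset.sum_const, mul_comm]
      _ ≤ B.card * D ^ (t + 2) := by
          refine Nat.mul_le_mul_left _ ?_
          have h4 : 2 * D ^ t ≤ D ^ (t + 2) := by
            have : D ^ (t+2) = D ^ t * (D * D) := by ring
            rw [this]
            have h5 : 2 ≤ D * D := le_trans hD (Nat.le_mul_of_pos_left D (by omega))
            calc 2 * D ^ t = D ^ t * 2 := by ring
              _ ≤ D ^ t * (D * D) := Nat.mul_le_mul_left _ h5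
          omega
  have hnotsub : ¬ S ⊆ Bad := by
    intro hsub
    exact absurd (Finset.card_le_card hsub) (by omega)
  obtain ⟨x, hxS, hxBad⟩ := Finset.not_subset.mp hnotsub
  refine ⟨x, hxS, fun y ⟨w, hw⟩ => ?_⟩
  by_contra hyS
  obtain ⟨b, hb, w', hw'⟩ := walk_to_boundary w hxS hyS
  exact hxBad <| Finset.mem_biUnion.2 ⟨b, by simpa [hBdef] using hb,
    mem_ballTo.2 ⟨w', le_trans hw' hw⟩⟩
end
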